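/- arXiv:0806.2135 — 8 statements merged into one kernel-verified Lean document; each statement's English description precedes it below -/
import Mathlib

section
/- Let g be an element of a finite group G with derived subgroup G'. Then the following are equivalent: (1) the conjugacy class of g equals the coset gG'; (2) |C_G(g)| = [G : G']; (3) for every z ∈ G' there exists y ∈ G with [g,y] = z; (4) χ(g) = 0 for every nonlinear irreducible complex character χ of G. -/
open CategoryTheory

/-- `χ` is a nonlinear irreducible complex character of `G`: the character of some
irreducible (simple) finite-dimensional complex representation of degree greater than `1`. -/
def IsNonlinearIrrChar (G : Type) [Group G] (χ : G → ℂ) : Prop :=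
  ∃ V : FDRep ℂ G, Simple V ∧ 1 < Module.finrank ℂ V ∧ χ = V.character

/-- The vanishing-off subgroup `V(χ)` of a character `χ`: the subgroup generated by the
elements where `χ` does not vanish. -/
def charVanishingOff {G : Type} [Group G] (χ : G → ℂ) : Subgroup G :=
  Subgroup.closure {g : G | χ g ≠ 0}

/-- The vanishing-off subgroup `V(G)`: the subgroup generated by all elements on which some
nonlinear irreducible complex character of `G` does not vanish. -/
def vanishingOff (G : Type) [Group G] : Subgroup G :=
  Subgroup.closure {g : G | ∃ χ : G → ℂ, IsNonlinearIrrChar G χ ∧ χ g ≠ 0}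

instance vanishingOff_normal (G : Type) [Group G] : (vanishingOff G).Normal := by
  constructor
  intro x hx g
  have hsub : (MulAut.conj g).toMonoidHom ''
      {a : G | ∃ χ : G → ℂ, IsNonlinearIrrChar G χ ∧ χ a ≠ 0}
      ⊆ {a : G | ∃ χ : G → ℂ, IsNonlinearIrrChar G χ ∧ χ a ≠ 0} := by
    rintro _ ⟨z, ⟨χ, ⟨V, hV1, hV2, rfl⟩, hz⟩, rfl⟩
    refine ⟨V.character, ⟨V, hV1, hV2, rfl⟩, ?_⟩
    show V.character (g * z * g⁻¹) ≠ 0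
    rw [FDRep.char_conj]
    exact hz
  have hmap : Subgroup.map (MulAut.conj g).toMonoidHom (vanishingOff G) ≤ vanishingOff G := by
    rw [vanishingOff, MonoidHom.map_closure]
    exact Subgroup.closure_mono hsub
  exact hmap ⟨x, hx, rfl⟩

/-- `g` is a Camina element of `G`: its conjugacy class equals the coset `g G'`,
where `G'` is the derived subgroup. -/
def IsCaminaElement {G : Type} [Group G] (g : G) : Prop :=
  {x : G | IsConj g x} = (g * ·) '' (commutator G : Set G)

/-- `(G, N)` is a generalized Camina pair: `N` is normal in `G` and every element of
`G \ N` is a Camina element of `G`. -/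
def IsGCP (G : Type) [Group G] (N : Subgroup G) : Prop :=
  N.Normal ∧ ∀ g : G, g ∉ N → IsCaminaElement g

/-- The central series attached to the vanishing-off subgroup:
`Vseries G (i - 1)` is `V_i(G)`, so `V_1(G) = V(G)` and `V_{i+1}(G) = [V_i(G), G]`. -/
def Vseries (G : Type) [Group G] : ℕ → Subgroup G
  | 0 => vanishingOff G
  | n + 1 => ⁅Vseries G n, ⊤⁆

theorem Vseries_normal (G : Type) [Group G] : ∀ n, (Vseries G n).Normal
  | 0 => vanishingOff_normal G
  | n + 1 => @Subgroup.commutator_normal G _ (Vseries G n) ⊤ (Vseries_normal G n) inferInstance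

instance (G : Type) [Group G] (n : ℕ) : (Vseries G n).Normal := Vseries_normal G n


open Module

section CaminaAux
-- experiment: subrepresentation machinery
variable {G : Type} [Group G]
section
variable {V : Type} [AddCommGroup V] [Module ℂ V] [FiniteDimensional ℂ V]

def resRep (ρ : Representation ℂ G V) (W : Submodule ℂ V) (hW : ∀ (g : G), ∀ w ∈ W, ρ g w ∈ W) :
    Representation ℂ G ↥W where
  toFun g := (ρ g).restrict (fun w hw => hW g w hw)
  map_one' := by ext w; simp [LinearMap.restrict_apply]
  map_mul' g h := by ext w; simp [LinearMap.restrict_apply]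
end

def subHom (V : FDRep ℂ G) (W : Submodule ℂ V) (hW : ∀ (g : G), ∀ w ∈ W, V.ρ g w ∈ W) :
    FDRep.of (resRep V.ρ W hW) ⟶ V where
  hom := FGModuleCat.ofHom W.subtype
  comm g := by ext w; rfl

lemma subHom_ne_zero (V : FDRep ℂ G) (W : Submodule ℂ V) (hW) (hBot : W ≠ ⊥) :
    subHom V W hW ≠ 0 := by
  intro h
  obtain ⟨w, hw, hne⟩ := Submodule.exists_mem_ne_zero_of_ne_bot hBot
  have h0 : (subHom V W hW).hom ⟨w, hw⟩ = 0 := by rw [h]; rfl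
  exact hne (by simpa [subHom] using h0)

lemma mono_subHom (V : FDRep ℂ G) (W : Submodule ℂ V) (hW) : Mono (subHom V W hW) := by
  apply Preadditive.mono_of_cancel_zero
  intro Z u hu
  ext z
  have h1 : (u ≫ subHom V W hW).hom z = (0 : Z ⟶ V).hom z := by rw [hu]
  have h2 : W.subtype (u.hom z) = 0 := h1
  simp only [Action.zero_hom, LinearMap.zero_apply]
  refine h2.trans ?_
  simp

lemma invariant_eq_bot_or_top (V : FDRep ℂ G) [Simple V] (W : Submodule ℂ V)
    (hW : ∀ (g : G), ∀ w ∈ W, V.ρ g w ∈ W) : W = ⊥ ∨ W = ⊤ := by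
  by_cases hB : W = ⊥
  · exact Or.inl hB
  · right
    haveI := mono_subHom V W hW
    haveI : IsIso (subHom V W hW) := isIso_of_mono_of_nonzero (subHom_ne_zero V W hW hB)
    have hsurj : ∀ v : V, ∃ w : W, W.subtype w = v := by
      intro v
      refine ⟨(inv (subHom V W hW)).hom v, ?_⟩
      have := congrArg (fun f : V ⟶ V => f.hom v) (IsIso.inv_hom_id (subHom V W hW))
      exact this
    rw [eq_top_iff]
    intro v _
    obtain ⟨w, rfl⟩ := hsurj v
    exact w.2

lemma simple_of_invariant (V : FDRep ℂ G) (hnt : Nontrivial V)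
    (h : ∀ W : Submodule ℂ V, (∀ (g : G), ∀ w ∈ W, V.ρ g w ∈ W) → W = ⊥ ∨ W = ⊤) :
    Simple V := by
  constructor
  intro Y f hm
  constructor
  · rintro hiso rfl
    have h1 : inv (0 : Y ⟶ V) ≫ (0 : Y ⟶ V) = 𝟙 V := IsIso.inv_hom_id _
    rw [Limits.comp_zero] at h1
    obtain ⟨v, w, hvw⟩ := hnt
    apply hvw
    have hv : (𝟙 V : V ⟶ V).hom v = (0 : V ⟶ V).hom v := by rw [← h1]
    have hw : (𝟙 V : V ⟶ V).hom w = (0 : V ⟶ V).hom w := by rw [← h1]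
    simp only [Action.id_hom, Action.zero_hom, LinearMap.zero_apply] at hv hw
    calc v = (0 : V) := hv
    _ = w := hw.symm
  · intro hf
    -- injectivity
    have hKinv : ∀ (g : G), ∀ w ∈ LinearMap.ker (f.hom.hom.hom : Y →ₗ[ℂ] V),
        Y.ρ g w ∈ LinearMap.ker (f.hom.hom.hom : Y →ₗ[ℂ] V) := by
      intro g w hw
      rw [LinearMap.mem_ker] at hw ⊢
      have hc : f.hom (Y.ρ g w) = V.ρ g (f.hom w) := congrArg (fun φ => φ w) (f.comm g)
      exact hc.trans ((congrArg (V.ρ g) hw).trans (map_zero _))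
    have hι : subHom Y _ hKinv ≫ f = 0 := by
      ext k
      show f.hom ((LinearMap.ker (f.hom.hom.hom : Y →ₗ[ℂ] V)).subtype k) = _
      simp only [Action.zero_hom, LinearMap.zero_apply]
      exact k.2
    have hι0 : subHom Y _ hKinv = 0 := Limits.zero_of_comp_mono f hι
    have hker : LinearMap.ker (f.hom.hom.hom : Y →ₗ[ℂ] V) = ⊥ := by
      rw [LinearMap.ker_eq_bot']
      intro m hme
      have h2 : (subHom Y _ hKinv).hom ⟨m, hme⟩ = 0 := by rw [hι0]; rfl
      simpa [subHom] using h2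
    -- surjectivity
    have hRinv : ∀ (g : G), ∀ w ∈ LinearMap.range (f.hom.hom.hom : Y →ₗ[ℂ] V),
        V.ρ g w ∈ LinearMap.range (f.hom.hom.hom : Y →ₗ[ℂ] V) := by
      rintro g _ ⟨y, rfl⟩
      exact ⟨Y.ρ g y, congrArg (fun φ => φ y) (f.comm g)⟩
    have hrange : LinearMap.range (f.hom.hom.hom : Y →ₗ[ℂ] V) = ⊤ := by
      rcases h _ hRinv with hb | ht
      · exfalso
        apply hf
        ext y
        simp only [Action.zero_hom, LinearMap.zero_apply]
        show f.hom y = 0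
        have h3 : f.hom y ∈ LinearMap.range (f.hom.hom.hom : Y →ₗ[ℂ] V) := ⟨y, rfl⟩
        rwa [hb, Submodule.mem_bot] at h3
      · exact ht
    have hbij : Function.Bijective (f.hom.hom.hom : Y →ₗ[ℂ] V) :=
      ⟨LinearMap.ker_eq_bot.mp hker, LinearMap.range_eq_top.mp hrange⟩
    let e := LinearEquiv.ofBijective (f.hom.hom.hom : Y →ₗ[ℂ] V) hbij
    have hecomm : ∀ g : G, ∀ v : V, e.symm (V.ρ g v) = Y.ρ g (e.symm v) := by
      intro g v
      apply e.injective
      rw [e.apply_symm_apply]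
      show V.ρ g v = f.hom (Y.ρ g (e.symm v))
      have h2 : f.hom (Y.ρ g (e.symm v)) = V.ρ g (f.hom (e.symm v)) :=
        congrArg (fun φ => φ (e.symm v)) (f.comm g)
      refine (h2.trans ?_).symm
      exact congrArg (V.ρ g) (e.apply_symm_apply v)
    refine ⟨⟨⟨FGModuleCat.ofHom e.symm.toLinearMap, ?_⟩, ?_, ?_⟩⟩
    · intro g
      ext v
      show e.symm (V.ρ g v) = Y.ρ g (e.symm v)
      exact hecomm g v
    · ext y
      show e.symm (e y) = y
      exact e.symm_apply_apply y
    · ext v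
      show e (e.symm v) = v
      exact e.apply_symm_apply v

lemma sum_char_coset (V : FDRep ℂ G) [Simple V] [Fintype (commutator G)] :
    (∀ z ∈ commutator G, V.ρ z = 1) ∨
      ∀ x : G, ∑ z : commutator G, V.character (x * z) = 0 := by
  classical
  set W : Submodule ℂ V := Representation.invariants (k := ℂ) (G := commutator G) (V.ρ.comp (commutator G).subtype) with hWdef
  have hmemW : ∀ v : V, v ∈ W ↔ ∀ z : commutator G, V.ρ (z : G) v = v := fun v =>
    Representation.mem_invariants _ v
  have hWinv : ∀ (g : G), ∀ w ∈ W, V.ρ g w ∈ W := by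
    intro g w hw
    rw [hmemW] at hw ⊢
    intro z
    have hz' : g⁻¹ * (z : G) * g ∈ commutator G := by
      have := Subgroup.Normal.conj_mem (inferInstance : (commutator G).Normal) _ z.2 g⁻¹
      simpa using this
    have : V.ρ (z : G) (V.ρ g w) = V.ρ g (V.ρ (g⁻¹ * z * g) w) := by
      rw [← Module.End.mul_apply, ← map_mul, ← Module.End.mul_apply, ← map_mul]
      congr 1
      group
    rw [this, hw ⟨_, hz'⟩]
  rcases invariant_eq_bot_or_top V W hWinv with hbot | htop
  · right
    intro x
    have hsum0 : (∑ z : commutator G, V.ρ (z : G)) = 0 := by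
      ext v
      have hmem : (∑ z : commutator G, V.ρ (z : G)) v ∈ W := by
        rw [hmemW]
        intro z₀
        rw [LinearMap.sum_apply, map_sum]
        have : ∀ z : commutator G, V.ρ (z₀ : G) (V.ρ (z : G) v) = V.ρ ((z₀ * z : commutator G) : G) v := by
          intro z
          rw [← Module.End.mul_apply, ← map_mul]
          rfl
        rw [Finset.sum_congr rfl (fun z _ => this z)]
        exact Fintype.sum_equiv (Equiv.mulLeft z₀) _ _ (fun z => rfl)
      rw [hbot] at hmem
      simpa using hmem
    have : ∀ z : commutator G, V.character (x * z) =
        LinearMap.trace ℂ V (V.ρ x * V.ρ (z : G)) := by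
      intro z
      rw [FDRep.character, map_mul]
    rw [Finset.sum_congr rfl (fun z _ => this z), ← map_sum, ← Finset.mul_sum, hsum0,
      mul_zero, map_zero]
  · left
    intro z hz
    ext v
    have hv : v ∈ W := htop ▸ Submodule.mem_top
    rw [hmemW] at hv
    exact hv ⟨z, hz⟩

section FinrankOne
variable {V : Type} [AddCommGroup V] [Module ℂ V] [FiniteDimensional ℂ V]

lemma endo_comm_of_finrank_one (h1 : finrank ℂ V = 1) (f g : V →ₗ[ℂ] V) :
    f * g = g * f := by
  obtain ⟨v, hv0, hv⟩ := finrank_eq_one_iff'.mp h1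
  ext w
  obtain ⟨c, rfl⟩ := hv w
  obtain ⟨a, ha⟩ := hv (f v)
  obtain ⟨b, hb⟩ := hv (g v)
  show f (g (c • v)) = g (f (c • v))
  simp only [map_smul, ← hb, ← ha, smul_smul]
  congr 1
  ring

lemma trivial_on_commutator_of_finrank_one (ρ : Representation ℂ G V)
    (h1 : finrank ℂ V = 1) : ∀ z ∈ commutator G, ρ z = 1 := by
  intro z hz
  rw [commutator_eq_closure] at hz
  induction hz using Subgroup.closure_induction with
  | mem x hx =>
    obtain ⟨a, b, rfl⟩ := hx
    show ρ (a * b * a⁻¹ * b⁻¹) = 1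
    have hc := endo_comm_of_finrank_one h1 (ρ b) (ρ a⁻¹)
    have h2 : ρ (a * b * a⁻¹ * b⁻¹) = ρ a * (ρ b * ρ a⁻¹) * ρ b⁻¹ := by
      rw [ρ.map_mul, ρ.map_mul, ρ.map_mul, mul_assoc (ρ a)]
    rw [h2, hc, ← mul_assoc, ← ρ.map_mul, mul_inv_cancel, ρ.map_one, one_mul, ← ρ.map_mul,
      mul_inv_cancel, ρ.map_one]
  | one => exact ρ.map_one
  | mul x y hx hy hx1 hy1 => rw [ρ.map_mul, hx1, hy1, one_mul]
  | inv x hx hx1 =>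
    have h := ρ.map_mul x⁻¹ x
    rw [inv_mul_cancel, ρ.map_one, hx1, mul_one] at h
    exact h.symm

end FinrankOne

lemma nonlinear_char_sum_zero (V : FDRep ℂ G) [Simple V] [Fintype (commutator G)]
    (hfr : 1 < finrank ℂ V) (x : G) :
    ∑ z : commutator G, V.character (x * z) = 0 := by
  rcases sum_char_coset V with htriv | hzero
  · exfalso
    -- every ρ g is equivariant, hence scalar, so every line is invariant: contradiction
    have hscal : ∀ g : G, ∃ c : ℂ, V.ρ g = c • LinearMap.id := by
      intro g
      have hφ : ∀ y : G, ∀ v : V, V.ρ g (V.ρ y v) = V.ρ y (V.ρ g v) := by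
        intro y v
        have hc : g⁻¹ * y⁻¹ * g * y ∈ commutator G := by
          have h7 := Subgroup.commutator_mem_commutator (Subgroup.mem_top (g⁻¹ : G))
            (Subgroup.mem_top (y⁻¹ : G))
          rw [commutator_def]
          simpa [commutatorElement_def, mul_assoc] using h7
        have h5 : V.ρ (g * y) = V.ρ (y * g) := by
          have h6 : g * y = (y * g) * (g⁻¹ * y⁻¹ * g * y) := by group
          rw [h6, map_mul, htriv _ hc, mul_one]
        rw [← Module.End.mul_apply, ← map_mul, h5, map_mul, Module.End.mul_apply]
      obtain ⟨c, hc⟩ := endomorphism_simple_eq_smul_id (C := FDRep ℂ G) (X := V) ℂ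
        (⟨FGModuleCat.ofHom (V.ρ g), fun y => by ext v; exact hφ y v⟩ : V ⟶ V)
      refine ⟨c, ?_⟩
      have := congrArg Action.Hom.hom hc
      simp only [Action.smul_hom, Action.id_hom] at this
      exact (congrArg (fun f => f.hom.hom) this).symm
    have hnt : Nontrivial V := Module.nontrivial_of_finrank_pos (R := ℂ) (by omega)
    obtain ⟨v, hv0⟩ := exists_ne (0 : V)
    have hWinv : ∀ (g : G), ∀ w ∈ Submodule.span ℂ {v}, V.ρ g w ∈ Submodule.span ℂ {v} := by
      intro g w hw
      obtain ⟨c, hc⟩ := hscal g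
      rw [hc]
      exact Submodule.smul_mem _ c hw
    rcases invariant_eq_bot_or_top V _ hWinv with hb | ht
    · exact hv0 ((Submodule.span_singleton_eq_bot (R := ℂ)).mp hb)
    · have : finrank ℂ V = 1 := by
        rw [← finrank_span_singleton (K := ℂ) hv0, ht, finrank_top]
      omega
  · exact hzero x

section Regular
variable (G)
variable [Fintype G]

abbrev GA := MonoidAlgebra ℂ G

instance : FiniteDimensional ℂ (GA G) :=
  Module.Finite.equiv ((Finsupp.linearEquivFunOnFinite ℂ ℂ G).symm.trans (MonoidAlgebra.coeffLinearEquiv ℂ).symm)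

/-- The left regular representation. -/
@[reducible] noncomputable def regRep : Representation ℂ G (GA G) :=
  ((Algebra.lmul ℂ (GA G)).toRingHom.toMonoidHom).comp (MonoidAlgebra.of ℂ G)

variable {G}

lemma regRep_apply (g : G) (v : GA G) :
    regRep G g v = MonoidAlgebra.single g 1 * v := rfl

variable (S : Submodule (GA G) (GA G))

lemma restrict_invariant :
    ∀ (g : G), ∀ w ∈ S.restrictScalars ℂ, regRep G g w ∈ S.restrictScalars ℂ := by
  intro g w hw
  rw [Submodule.restrictScalars_mem] at hw ⊢
  rw [regRep_apply, ← smul_eq_mul]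
  exact S.smul_mem _ hw

/-- A simple submodule of the group algebra as an `FDRep`. -/
@[reducible] noncomputable def subFDRep : FDRep ℂ G :=
  FDRep.of (resRep (regRep G) (S.restrictScalars ℂ) (restrict_invariant S))

/-- Coercion from the subrepresentation to the group algebra. -/
noncomputable def coeGA (v : subFDRep S) : GA G := Subtype.val v

lemma coeGA_mem (v : subFDRep S) : coeGA S v ∈ S := v.2

lemma coeGA_inj {v w : subFDRep S} (h : coeGA S v = coeGA S w) : v = w := Subtype.ext h

lemma subFDRep_ρ_coe (g : G) (v : subFDRep S) :
    coeGA S ((subFDRep S).ρ g v) = MonoidAlgebra.single g 1 * coeGA S v := rfl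

lemma subFDRep_simple (hS : IsAtom S) : Simple (subFDRep S) := by
  classical
  apply simple_of_invariant
  · show Nontrivial ↥(S.restrictScalars ℂ)
    rw [Submodule.nontrivial_iff_ne_bot, Ne, Submodule.restrictScalars_eq_bot_iff]
    exact hS.1
  · intro U hU
    -- the image of U in the group algebra
    set U' : Submodule ℂ (GA G) := U.map (S.restrictScalars ℂ).subtype with hU'def
    have hsingle_mem : ∀ (g : G), ∀ m ∈ U', MonoidAlgebra.single g (1 : ℂ) * m ∈ U' := by
      rintro g m ⟨u, hu, rfl⟩
      exact ⟨(subFDRep S).ρ g u, hU g u hu, rfl⟩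
    have hsmul : ∀ (a : GA G), ∀ m ∈ U', a * m ∈ U' := by
      intro a m hm
      rw [← MonoidAlgebra.sum_coeff_single a, Finsupp.sum_mul]
      apply Submodule.sum_mem
      intro g _
      show MonoidAlgebra.single g (a.coeff g) * m ∈ U'
      have h1 : MonoidAlgebra.single g (a.coeff g) * m
          = (a.coeff g) • (MonoidAlgebra.single g (1 : ℂ) * m) := by
        rw [← smul_mul_assoc, MonoidAlgebra.smul_single', mul_one]
      rw [h1]
      exact U'.smul_mem _ (hsingle_mem g m hm)
    set T : Submodule (GA G) (GA G) :=
      { carrier := U'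
        add_mem' := fun ha hb => U'.add_mem ha hb
        zero_mem' := U'.zero_mem
        smul_mem' := fun a m hm => hsmul a m hm } with hTdef
    have hT_le : T ≤ S := by
      rintro m ⟨u, _, rfl⟩
      exact u.2
    rcases lt_or_eq_of_le hT_le with hlt | heq
    · left
      have hT_bot : T = ⊥ := hS.2 T hlt
      rw [eq_bot_iff]
      intro u hu
      have h2 : (S.restrictScalars ℂ).subtype u ∈ T := ⟨u, hu, rfl⟩
      rw [hT_bot, Submodule.mem_bot] at h2
      rw [Submodule.mem_bot]
      exact Subtype.ext h2
    · right
      rw [eq_top_iff]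
      intro w _
      have hw : (S.restrictScalars ℂ).subtype w ∈ T := by rw [heq]; exact w.2
      obtain ⟨u, hu, huw⟩ := hw
      rwa [show u = w from Subtype.ext huw] at hu

end Regular

section Main
variable [Fintype G]

noncomputable def coeL (S : Submodule (GA G) (GA G)) : (subFDRep S) →ₗ[ℂ] GA G :=
  (S.restrictScalars ℂ).subtype

lemma coeL_inj (S : Submodule (GA G) (GA G)) {v w : subFDRep S}
    (h : coeL S v = coeL S w) : v = w := Subtype.ext h

lemma coeL_ρ (S : Submodule (GA G) (GA G)) (g : G) (v : subFDRep S) :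
    coeL S ((subFDRep S).ρ g v) = MonoidAlgebra.single g 1 * coeL S v := rfl

lemma trace_smul_sub_smul {M : Type} [AddCommGroup M] [Module ℂ M] (a b : ℂ)
    (X Y : M →ₗ[ℂ] M) :
    LinearMap.trace ℂ M (a • X - b • Y) = a * LinearMap.trace ℂ M X - b * LinearMap.trace ℂ M Y := by
  rw [map_sub, map_smul, map_smul, smul_eq_mul, smul_eq_mul]

lemma isConj_coset (g : G)
    (h4 : ∀ χ : G → ℂ, IsNonlinearIrrChar G χ → χ g = 0) :
    ∀ z ∈ commutator G, IsConj g (g * z) := by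
  classical
  set H := commutator G with hHdef
  set clF : Finset G := Finset.univ.filter (fun x => IsConj g x) with hclFdef
  set a : GA G := (Fintype.card H : ℂ) • (∑ x ∈ clF, MonoidAlgebra.single x 1)
      - (clF.card : ℂ) • (∑ z : H, MonoidAlgebra.single (g * (z : G)) 1) with hadef
  -- centrality of `a`
  have hmemcl : ∀ {x : G}, x ∈ clF ↔ IsConj g x := by
    intro x; rw [hclFdef, Finset.mem_filter]; simp
  have hA : ∀ y : G, MonoidAlgebra.single y (1 : ℂ) * (∑ x ∈ clF, MonoidAlgebra.single x 1)
      = (∑ x ∈ clF, MonoidAlgebra.single x 1) * MonoidAlgebra.single y 1 := by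
    intro y
    rw [Finset.mul_sum, Finset.sum_mul]
    simp only [MonoidAlgebra.single_mul_single, one_mul]
    refine Finset.sum_nbij' (fun x => y * x * y⁻¹) (fun x => y⁻¹ * x * y) ?_ ?_ ?_ ?_ ?_
    · intro x hx
      rw [hmemcl] at hx ⊢
      exact hx.trans (isConj_iff.mpr ⟨y, rfl⟩)
    · intro x hx
      rw [hmemcl] at hx ⊢
      exact hx.trans (isConj_iff.mpr ⟨y⁻¹, by group⟩)
    · intro x _; group
    · intro x _; group
    · intro x _
      congr 1
      group
  have hB : ∀ y : G, MonoidAlgebra.single y (1 : ℂ) * (∑ z : H, MonoidAlgebra.single (g * (z : G)) 1)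
      = (∑ z : H, MonoidAlgebra.single (g * (z : G)) 1) * MonoidAlgebra.single y 1 := by
    intro y
    rw [Finset.mul_sum, Finset.sum_mul]
    simp only [MonoidAlgebra.single_mul_single, one_mul]
    have hmem1 : ∀ z : H, g⁻¹ * y * g * (z : G) * y⁻¹ ∈ H := by
      intro z
      have h1 : g⁻¹ * y * g * (z : G) * y⁻¹ = (g⁻¹ * y * g * y⁻¹) * (y * (z : G) * y⁻¹) := by group
      rw [h1]
      refine Subgroup.mul_mem _ ?_ ?_
      · have h7 := Subgroup.commutator_mem_commutator (Subgroup.mem_top (g⁻¹ : G))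
          (Subgroup.mem_top (y : G))
        rw [hHdef, commutator_def]
        simpa [commutatorElement_def, mul_assoc] using h7
      · exact Subgroup.Normal.conj_mem inferInstance _ z.2 y
    have hmem2 : ∀ z : H, g⁻¹ * y⁻¹ * g * (z : G) * y ∈ H := by
      intro z
      have h1 : g⁻¹ * y⁻¹ * g * (z : G) * y = (g⁻¹ * y⁻¹ * g * y) * (y⁻¹ * (z : G) * y) := by
        group
      rw [h1]
      refine Subgroup.mul_mem _ ?_ ?_
      · have h7 := Subgroup.commutator_mem_commutator (Subgroup.mem_top (g⁻¹ : G))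
          (Subgroup.mem_top (y⁻¹ : G))
        rw [hHdef, commutator_def]
        simpa [commutatorElement_def, mul_assoc] using h7
      · have := Subgroup.Normal.conj_mem (inferInstance : H.Normal) _ z.2 y⁻¹
        simpa using this
    refine Fintype.sum_equiv
      ⟨fun z => ⟨g⁻¹ * y * g * (z : G) * y⁻¹, hmem1 z⟩,
       fun z => ⟨g⁻¹ * y⁻¹ * g * (z : G) * y, hmem2 z⟩,
       fun z => by ext; show g⁻¹ * y⁻¹ * g * (g⁻¹ * y * g * (z : G) * y⁻¹) * y = (z : G); group,
       fun z => by ext; show g⁻¹ * y * g * (g⁻¹ * y⁻¹ * g * (z : G) * y) * y⁻¹ = (z : G); group⟩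
      _ _ ?_
    intro z
    show MonoidAlgebra.single (y * (g * (z : G))) (1 : ℂ)
      = MonoidAlgebra.single (g * (g⁻¹ * y * g * (z : G) * y⁻¹) * y) 1
    congr 1
    group
  have ha : ∀ y : G, MonoidAlgebra.single y (1 : ℂ) * a = a * MonoidAlgebra.single y 1 := by
    intro y
    rw [hadef, mul_sub, sub_mul, Algebra.mul_smul_comm, Algebra.smul_mul_assoc,
      Algebra.mul_smul_comm, Algebra.smul_mul_assoc, hA y, hB y]
  haveI : NeZero ((Fintype.card G : ℂ)) := ⟨Nat.cast_ne_zero.mpr Fintype.card_ne_zero⟩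
  -- `a` annihilates every simple submodule
  have hann : ∀ (S : Submodule (GA G) (GA G)), IsAtom S → ∀ s ∈ S, a * s = 0 := by
    intro S hS s hs
    haveI hsimple : Simple (subFDRep S) := subFDRep_simple S hS
    have hnt : Nontrivial (subFDRep S) := by
      show Nontrivial ↥(S.restrictScalars ℂ)
      rw [Submodule.nontrivial_iff_ne_bot, Ne, Submodule.restrictScalars_eq_bot_iff]
      exact hS.1
    set T : (subFDRep S) →ₗ[ℂ] (subFDRep S) := (Fintype.card H : ℂ) • (∑ x ∈ clF, (subFDRep S).ρ x)
        - (clF.card : ℂ) • (∑ z : H, (subFDRep S).ρ (g * (z : G))) with hTdef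
    have hTapply : ∀ v : (subFDRep S), coeL S (T v) = a * coeL S v := by
      intro v
      rw [hTdef, LinearMap.sub_apply, LinearMap.smul_apply, LinearMap.sum_apply,
        LinearMap.smul_apply, LinearMap.sum_apply, map_sub, map_smul, map_smul,
        map_sum, map_sum]
      simp only [coeL_ρ]
      rw [hadef, sub_mul, smul_mul_assoc, smul_mul_assoc, Finset.sum_mul, Finset.sum_mul]
      rfl
    have hτcomm : ∀ y : G, ∀ v : (subFDRep S), T ((subFDRep S).ρ y v) = (subFDRep S).ρ y (T v) := by
      intro y v
      apply coeL_inj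
      rw [hTapply, coeL_ρ, coeL_ρ, hTapply, ← mul_assoc, ← mul_assoc, ← ha y]
    obtain ⟨c, hc⟩ := endomorphism_simple_eq_smul_id (C := FDRep ℂ G) (X := (subFDRep S)) ℂ
      (⟨FGModuleCat.ofHom T, fun y => FGModuleCat.hom_ext (LinearMap.ext fun v => hτcomm y v)⟩ : (subFDRep S) ⟶ (subFDRep S))
    have hThom : T = c • LinearMap.id := by
      have h2 := congrArg Action.Hom.hom hc
      simp only [Action.smul_hom, Action.id_hom] at h2
      exact (congrArg (fun f => f.hom.hom) h2).symm
    have htrace : LinearMap.trace ℂ (subFDRep S) T =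
        (Fintype.card H : ℂ) * (∑ x ∈ clF, (subFDRep S).character x)
          - (clF.card : ℂ) * (∑ z : H, (subFDRep S).character (g * (z : G))) := by
      rw [hTdef]
      refine (trace_smul_sub_smul _ _ _ _).trans ?_
      rw [map_sum, map_sum]
      rfl
    have hsumcl : ∑ x ∈ clF, (subFDRep S).character x = clF.card • (subFDRep S).character g := by
      have hterm2 : ∀ x ∈ clF, (subFDRep S).character x = (subFDRep S).character g := by
        intro x hx
        rw [hmemcl] at hx
        obtain ⟨u, hu⟩ := isConj_iff.mp hx
        rw [← hu]
        exact FDRep.char_conj (subFDRep S) g u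
      rw [Finset.sum_congr rfl hterm2, Finset.sum_const]
    have hzero : LinearMap.trace ℂ (subFDRep S) T = 0 := by
      by_cases htriv : ∀ z ∈ commutator G, (subFDRep S).ρ z = 1
      · have htriv_sum : ∑ z : H, (subFDRep S).character (g * (z : G))
            = (Fintype.card H) • (subFDRep S).character g := by
          have hterm : ∀ z : H, (subFDRep S).character (g * (z : G)) = (subFDRep S).character g := by
            intro z
            show LinearMap.trace ℂ (subFDRep S) ((subFDRep S).ρ (g * (z : G))) = LinearMap.trace ℂ (subFDRep S) ((subFDRep S).ρ g)
            rw [map_mul, htriv _ z.2, mul_one]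
          rw [Finset.sum_congr rfl (fun z _ => hterm z), Finset.sum_const, Finset.card_univ]
        rw [htrace, hsumcl, htriv_sum]
        simp only [nsmul_eq_mul]
        ring
      · have h5 : ∑ z : H, (subFDRep S).character (g * (z : G)) = 0 := by
          rcases sum_char_coset (subFDRep S) with h6 | h6
          · exact absurd h6 htriv
          · exact h6 g
        have hfr : 1 < finrank ℂ (subFDRep S) := by
          have h0 : 0 < finrank ℂ (subFDRep S) := Module.finrank_pos
          rcases Nat.lt_or_ge (finrank ℂ (subFDRep S)) 2 with h | h
          · exact absurd (trivial_on_commutator_of_finrank_one (subFDRep S).ρ (by omega)) htriv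
          · omega
        have hχg : (subFDRep S).character g = 0 := h4 (subFDRep S).character ⟨(subFDRep S), hsimple, hfr, rfl⟩
        rw [htrace, hsumcl, h5, hχg, smul_zero, mul_zero, mul_zero, sub_zero]
    have hc0 : c = 0 := by
      have h7 : LinearMap.trace ℂ (subFDRep S) T = c * finrank ℂ (subFDRep S) := by
        rw [hThom, map_smul, LinearMap.trace_id, smul_eq_mul]
      rw [hzero] at h7
      have h8 : ((finrank ℂ (subFDRep S) : ℂ)) ≠ 0 :=
        Nat.cast_ne_zero.mpr Module.finrank_pos.ne'
      rcases mul_eq_zero.mp h7.symm with h | h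
      · exact h
      · exact absurd h h8
    have h10 := hTapply (⟨s, hs⟩ : ↥(S.restrictScalars ℂ))
    rw [hThom, hc0, zero_smul, LinearMap.zero_apply, map_zero] at h10
    exact h10.symm
  -- hence `a = 0` by semisimplicity
  have ha0 : a = 0 := by
    have h1top : (1 : GA G) ∈ (⊤ : Submodule (GA G) (GA G)) := Submodule.mem_top
    rw [← IsSemisimpleModule.sSup_simples_eq_top (MonoidAlgebra ℂ G) (MonoidAlgebra ℂ G),
      sSup_eq_iSup'] at h1top
    have h2 := Submodule.iSup_induction (motive := fun m => a * m = 0) _ h1top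
      (fun i x hx => hann i (isSimpleModule_iff_isAtom.mp i.2) x hx)
      (mul_zero a)
      (fun x y hx hy => by
        show a * (x + y) = 0
        rw [mul_add, show a * x = 0 from hx, show a * y = 0 from hy, add_zero])
    have h2' : a * 1 = 0 := h2
    rwa [mul_one] at h2' 
  -- extract coefficients
  intro z hz
  by_contra hnc
  have heval := congrArg (((Finsupp.lapply (R := ℂ) (M := ℂ) (g * z)).comp (MonoidAlgebra.coeffLinearEquiv ℂ).toLinearMap)) ha0
  rw [hadef, map_zero, map_sub, map_smul, map_smul] at heval
  have hs1 : ((Finsupp.lapply (R := ℂ) (M := ℂ) (g * z)).comp (MonoidAlgebra.coeffLinearEquiv ℂ).toLinearMap) (∑ x ∈ clF, MonoidAlgebra.single x (1 : ℂ)) = 0 := by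
    rw [map_sum]
    apply Finset.sum_eq_zero
    intro x hx
    show (MonoidAlgebra.single x (1 : ℂ)).coeff (g * z) = 0
    rw [MonoidAlgebra.coeff_single, Finsupp.single_apply, if_neg]
    intro hxe
    exact hnc (by rw [← hxe]; exact hmemcl.mp hx)
  have hs2 : ((Finsupp.lapply (R := ℂ) (M := ℂ) (g * z)).comp (MonoidAlgebra.coeffLinearEquiv ℂ).toLinearMap)
      (∑ w : H, MonoidAlgebra.single (g * (w : G)) (1 : ℂ)) = 1 := by
    rw [map_sum, Finset.sum_eq_single (⟨z, hz⟩ : H)]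
    · show (MonoidAlgebra.single (g * z) (1 : ℂ)).coeff (g * z) = 1
      rw [MonoidAlgebra.coeff_single, Finsupp.single_apply, if_pos rfl]
    · intro w _ hw
      show (MonoidAlgebra.single (g * (w : G)) (1 : ℂ)).coeff (g * z) = 0
      rw [MonoidAlgebra.coeff_single, Finsupp.single_apply, if_neg]
      intro hwe
      exact hw (Subtype.ext (mul_left_cancel hwe))
    · intro habs
      exact absurd (Finset.mem_univ _) habs
  rw [hs1, hs2, smul_zero, zero_sub, smul_eq_mul, mul_one, neg_eq_zero, Nat.cast_eq_zero,
    Finset.card_eq_zero] at heval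
  have hg : g ∈ clF := hmemcl.mpr (IsConj.refl g)
  rw [heval] at hg
  exact absurd hg (Finset.notMem_empty g)

-- counting lemmas
lemma card_orbit_stab [Finite G] (g : G) :
    Nat.card {x : G | IsConj g x} * Nat.card (Subgroup.centralizer ({g} : Set G))
      = Nat.card G := by
  classical
  haveI : Fintype G := Fintype.ofFinite G
  have horb : MulAction.orbit (ConjAct G) g = {x : G | IsConj g x} := by
    ext x
    rw [Set.mem_setOf_eq, ConjAct.mem_orbit_conjAct]
    exact isConj_comm
  have hcent : Nat.card (Subgroup.centralizer ({g} : Set G))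
      = Nat.card (MulAction.stabilizer (ConjAct G) g) := by
    rw [Subgroup.centralizer_eq_comap_stabilizer]
    exact Nat.card_congr
      ⟨fun x => ⟨ConjAct.toConjAct (x : G), x.2⟩,
       fun y => ⟨ConjAct.ofConjAct (y : ConjAct G), y.2⟩,
       fun x => Subtype.ext rfl, fun y => Subtype.ext rfl⟩
  rw [hcent, ← horb]
  rw [Nat.card_eq_fintype_card, Nat.card_eq_fintype_card, Nat.card_eq_fintype_card]
  exact MulAction.card_orbit_mul_card_stabilizer_eq_card_group (ConjAct G) g

lemma card_coset (g : G) :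
    Nat.card ((g * ·) '' (commutator G : Set G) : Set G) = Nat.card (commutator G) := by
  rw [Nat.card_coe_set_eq, Set.ncard_image_of_injective _ (mul_right_injective g),
    ← Nat.card_coe_set_eq]
  rfl

end Main

section GT
variable {G : Type} [Group G]

lemma conjClass_subset_coset (g : G) :
    {x : G | IsConj g x} ⊆ (g * ·) '' (commutator G : Set G) := by
  rintro x hx
  obtain ⟨c, hc⟩ := isConj_iff.mp hx
  refine ⟨g⁻¹ * (c * g * c⁻¹), ?_, by show g * _ = x; rw [← hc]; group⟩
  have h7 := Subgroup.commutator_mem_commutator (Subgroup.mem_top (g⁻¹ : G))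
    (Subgroup.mem_top (c : G))
  rw [commutator_def]
  show g⁻¹ * (c * g * c⁻¹) ∈ _
  simpa [commutatorElement_def, mul_assoc] using h7

lemma coset_eq_of_mem_conj (g : G) (h : ∀ z ∈ commutator G, IsConj g (g * z)) :
    {x : G | IsConj g x} = (g * ·) '' (commutator G : Set G) := by
  apply Set.Subset.antisymm (conjClass_subset_coset g)
  rintro _ ⟨z, hz, rfl⟩
  exact h z hz

end GT


end CaminaAux

/-- For an element `g` of a finite group `G`, the following are equivalent:
(1) the conjugacy class of `g` is the coset `g G'`;
(2) `|C_G(g)| = [G : G']`;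
(3) every `z ∈ G'` has the form `[g, y] = g⁻¹ y⁻¹ g y` for some `y ∈ G`;
(4) `χ(g) = 0` for every nonlinear irreducible complex character `χ` of `G`. -/
theorem camina_element_tfae (G : Type) [Group G] [Finite G] (g : G) :
    List.TFAE
      [{x : G | IsConj g x} = (g * ·) '' (commutator G : Set G),
       Nat.card (Subgroup.centralizer ({g} : Set G)) = (commutator G).index,
       ∀ z ∈ commutator G, ∃ y : G, g⁻¹ * y⁻¹ * g * y = z,
       ∀ χ : G → ℂ, IsNonlinearIrrChar G χ → χ g = 0] := by
  classical
  haveI : Fintype G := Fintype.ofFinite G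
  tfae_have 1 → 3 := by
    intro h1 z hz
    have hmem : g * z ∈ {x : G | IsConj g x} := by rw [h1]; exact ⟨z, hz, rfl⟩
    obtain ⟨c, hc⟩ := isConj_iff.mp hmem
    refine ⟨c⁻¹, ?_⟩
    have h6 : z = g⁻¹ * (c * g * c⁻¹) := by rw [hc]; group
    rw [h6]; group
  tfae_have 3 → 1 := by
    intro h3
    refine coset_eq_of_mem_conj g (fun z hz => ?_)
    obtain ⟨y, hy⟩ := h3 z hz
    rw [← hy]
    exact isConj_iff.mpr ⟨y⁻¹, by group⟩
  tfae_have 1 → 2 := by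
    intro h1
    have hcl : Nat.card {x : G | IsConj g x} = Nat.card (commutator G) := by
      rw [h1, card_coset g]
    have h5 := card_orbit_stab g
    have h6 := Subgroup.card_mul_index (commutator G)
    rw [hcl] at h5
    have h7 : Nat.card (commutator G) * Nat.card (Subgroup.centralizer ({g} : Set G))
        = Nat.card (commutator G) * (commutator G).index := by rw [h5, h6]
    exact Nat.eq_of_mul_eq_mul_left Nat.card_pos h7
  tfae_have 2 → 1 := by
    intro h2
    have h5 := card_orbit_stab g
    rw [h2] at h5
    have h6 := Subgroup.card_mul_index (commutator G)
    have hidx : 0 < (commutator G).index := by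
      rcases Nat.eq_zero_or_pos (commutator G).index with h | h
      · rw [h, mul_zero] at h6
        exact absurd h6.symm Nat.card_pos.ne'
      · exact h
    have hcl : Nat.card {x : G | IsConj g x} = Nat.card (commutator G) :=
      Nat.eq_of_mul_eq_mul_right hidx (h5.trans h6.symm)
    apply Set.eq_of_subset_of_ncard_le (conjClass_subset_coset g) ?_ (Set.toFinite _)
    rw [← Nat.card_coe_set_eq, ← Nat.card_coe_set_eq, card_coset g, ← hcl]
  tfae_have 1 → 4 := by
    intro h1
    rintro χ ⟨V, hS, hfr, rfl⟩
    haveI := hS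
    have hz := nonlinear_char_sum_zero V hfr g
    have hconst : ∀ z : commutator G, V.character (g * (z : G)) = V.character g := by
      intro z
      have hmem : g * (z : G) ∈ {x : G | IsConj g x} := by rw [h1]; exact ⟨z, z.2, rfl⟩
      obtain ⟨u, hu⟩ := isConj_iff.mp hmem
      rw [← hu]
      exact FDRep.char_conj V g u
    rw [Finset.sum_congr rfl (fun z _ => hconst z), Finset.sum_const, Finset.card_univ] at hz
    have hne : (Fintype.card (commutator G) : ℂ) ≠ 0 :=
      Nat.cast_ne_zero.mpr Fintype.card_ne_zero
    rw [nsmul_eq_mul, mul_eq_zero] at hz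
    exact hz.resolve_left hne
  tfae_have 4 → 3 := by
    intro h4 z hz
    have h5 := isConj_coset g h4 z hz
    obtain ⟨c, hc⟩ := isConj_iff.mp h5
    refine ⟨c⁻¹, ?_⟩
    have h6 : z = g⁻¹ * (c * g * c⁻¹) := by rw [hc]; group
    rw [h6]; group
  tfae_finish
end

section
/- Let N be a subgroup of a finite group G. If N contains a Camina element of G, then G' = [G, N], i.e., the derived subgroup of G equals the commutator subgroup generated by commutators of elements of G with elements of N. -/
open CategoryTheory

/-- If a subgroup `N` of a finite group `G` contains a Camina element of `G`,
then `G' = [G, N]`. -/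
theorem commutator_eq_of_caminaElement_mem (G : Type) [Group G] [Finite G]
    (N : Subgroup G) (h : ∃ g ∈ N, IsCaminaElement g) :
    commutator G = ⁅(⊤ : Subgroup G), N⁆ := by
  obtain ⟨g, hgN, hg⟩ := h
  refine le_antisymm ?_ ?_
  · intro c hc
    have hmem : g * c ∈ (g * ·) '' (commutator G : Set G) := ⟨c, hc, rfl⟩
    rw [← hg] at hmem
    obtain ⟨x, hx⟩ := hmem
    rw [SemiconjBy] at hx
    open scoped commutatorElement in
    have hcomm : c = ⁅g⁻¹, (x : G)⁆ := by
      rw [commutatorElement_def, inv_inv, mul_assoc g⁻¹, hx]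
      group
    rw [hcomm, Subgroup.commutator_comm]
    exact Subgroup.commutator_mem_commutator (Subgroup.inv_mem N hgN) (Subgroup.mem_top (x : G))
  · rw [commutator]
    exact Subgroup.commutator_mono le_rfl le_top
end

section
/- Let (G, N) be a generalized Camina pair with G a finite group, and let K be a normal subgroup of G with K ≤ N. Then (G/K, N/K) is a generalized Camina pair. -/
open CategoryTheory

/-- If `(G, N)` is a generalized Camina pair and `K` is a normal subgroup of `G` with
`K ≤ N`, then `(G/K, N/K)` is a generalized Camina pair. -/
theorem isGCP_quotient (G : Type) [Group G] [Finite G] (N K : Subgroup G) [K.Normal]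
    (hKN : K ≤ N) (h : IsGCP G N) :
    IsGCP (G ⧸ K) (N.map (QuotientGroup.mk' K)) := by
  obtain ⟨hN, hC⟩ := h
  constructor
  · exact Subgroup.Normal.map hN _ (QuotientGroup.mk'_surjective K)
  intro gbar hg
  obtain ⟨g, rfl⟩ := QuotientGroup.mk'_surjective K gbar
  have hgN : g ∉ N := fun hgN => hg ⟨g, hgN, rfl⟩
  have hcam := hC g hgN
  have hcomm : commutator (G ⧸ K) = (commutator G).map (QuotientGroup.mk' K) := by
    rw [commutator_def, commutator_def, Subgroup.map_commutator,
      Subgroup.map_top_of_surjective _ (QuotientGroup.mk'_surjective K)]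
  ext x
  simp only [Set.mem_setOf_eq, Set.mem_image]
  constructor
  · intro hx
    obtain ⟨a, ha⟩ := isConj_iff.mp hx
    refine ⟨((QuotientGroup.mk' K g)⁻¹ * a * (QuotientGroup.mk' K g) * a⁻¹ : G ⧸ K), ?_, ?_⟩
    · have : @Bracket.bracket (G ⧸ K) (G ⧸ K) commutatorElement (QuotientGroup.mk' K g)⁻¹ a ∈ commutator (G ⧸ K) := by
        rw [commutator_def]
        exact Subgroup.commutator_mem_commutator (Subgroup.mem_top _) (Subgroup.mem_top _)
      simpa [commutatorElement_def, mul_assoc] using this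
    · rw [← ha]; group
  · rintro ⟨c, hc, rfl⟩
    rw [hcomm] at hc
    obtain ⟨c₀, hc₀, rfl⟩ := hc
    have : IsConj g (g * c₀) := by
      have : g * c₀ ∈ {x : G | IsConj g x} := by
        rw [hcam]; exact ⟨c₀, hc₀, rfl⟩
      exact this
    obtain ⟨a, ha⟩ := isConj_iff.mp this
    refine isConj_iff.mpr ⟨QuotientGroup.mk' K a, ?_⟩
    rw [← map_inv, ← map_mul, ← map_mul, ha, map_mul]
end

section
/- Suppose (G, N) is a generalized Camina pair where G is a finite nonabelian nilpotent group and N < G. Then there is a prime p such that G/N is a p-group and G = P × Q, where P is the Sylow p-subgroup of G and Q is an abelian Hall p'-subgroup of G. -/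
open CategoryTheory

section PV
variable {G : Type} [Group G]

lemma pv_mem_of_pow_mem (N : Subgroup G) {g : G} {a : ℕ}
    (h : a.Coprime (orderOf g)) (hg : g ^ a ∈ N) : g ∈ N := by
  obtain ⟨m, hm⟩ := exists_pow_eq_self_of_coprime h
  exact hm ▸ N.pow_mem hg m

lemma pv_conjset_eq_orbit (g : G) :
    {z : G | IsConj g z} = MulAction.orbit (ConjAct G) g := by
  ext z
  rw [Set.mem_setOf_eq, ConjAct.mem_orbit_conjAct, isConj_comm]

lemma pv_orbit_stab [Finite G] (g : G) :
    Nat.card {z : G | IsConj g z} *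
      Nat.card (MulAction.stabilizer (ConjAct G) g) = Nat.card G := by
  have := Fintype.ofFinite G
  classical
  rw [pv_conjset_eq_orbit]
  simp only [Nat.card_eq_fintype_card]
  exact MulAction.card_orbit_mul_card_stabilizer_eq_card_group (ConjAct G) g

lemma pv_card_class_of_camina {g : G} (hg : IsCaminaElement g) :
    Nat.card {z : G | IsConj g z} = Nat.card (commutator G : Set G) := by
  rw [IsCaminaElement] at hg
  rw [hg, Nat.card_image_of_injective (mul_right_injective g)]

/-- The key commuting lemma for generalized Camina pairs. -/
lemma pv_key [Finite G] {N : Subgroup G} (h : IsGCP G N) {x y : G}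
    (hx : x ∉ N) (hcop : (orderOf x).Coprime (orderOf y)) (hc : Commute x y) :
    ∀ b : G, Commute b x → Commute b y := by
  have hxy : x * y ∉ N := by
    intro hmem
    apply hx
    have h1 : (x * y) ^ orderOf y ∈ N := N.pow_mem hmem _
    rw [hc.mul_pow, pow_orderOf_eq_one, mul_one] at h1
    exact pv_mem_of_pow_mem N hcop.symm h1
  obtain ⟨t, ht1, ht2⟩ := Nat.chineseRemainder hcop 1 0
  have hxt : (x * y) ^ t = x := by
    rw [hc.mul_pow]
    have h1 : x ^ t = x ^ 1 := pow_eq_pow_iff_modEq.mpr ht1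
    have h2 : y ^ t = y ^ 0 := pow_eq_pow_iff_modEq.mpr ht2
    rw [h1, h2, pow_one, pow_zero, mul_one]
  have hle : MulAction.stabilizer (ConjAct G) (x * y) ≤ MulAction.stabilizer (ConjAct G) x := by
    rw [ConjAct.stabilizer_eq_centralizer, ConjAct.stabilizer_eq_centralizer]
    intro c hc
    rw [Subgroup.mem_centralizer_iff] at hc ⊢
    intro w hw
    rw [Set.mem_singleton_iff.mp hw]
    have hc' : Commute (ConjAct.toConjAct (x * y)) c := hc _ rfl
    show ConjAct.toConjAct x * c = c * ConjAct.toConjAct x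
    rw [← hxt, map_pow]
    exact (hc'.pow_left t).eq
  have hcards : Nat.card (MulAction.stabilizer (ConjAct G) x) ≤
      Nat.card (MulAction.stabilizer (ConjAct G) (x * y)) := by
    have e1 := pv_orbit_stab x
    have e2 := pv_orbit_stab (x * y)
    rw [pv_card_class_of_camina (h.2 x hx)] at e1
    rw [pv_card_class_of_camina (h.2 (x * y) hxy)] at e2
    have hpos : 0 < Nat.card (commutator G : Set G) := by
      have : Nonempty (commutator G : Set G) := ⟨⟨1, Subgroup.one_mem _⟩⟩
      exact Nat.card_pos
    have := e1.trans e2.symm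
    exact le_of_eq (Nat.eq_of_mul_eq_mul_left hpos this)
  have heq : MulAction.stabilizer (ConjAct G) (x * y) =
      MulAction.stabilizer (ConjAct G) x := by
    haveI : Finite (ConjAct G) := ‹Finite G›
    exact Subgroup.eq_of_le_of_card_ge hle hcards
  intro b hbx
  have hbst : ConjAct.toConjAct b ∈ MulAction.stabilizer (ConjAct G) x := by
    rw [MulAction.mem_stabilizer_iff, ConjAct.smul_def, ConjAct.ofConjAct_toConjAct]
    rw [mul_inv_eq_iff_eq_mul]
    exact hbx.eq
  rw [← heq, MulAction.mem_stabilizer_iff, ConjAct.smul_def, ConjAct.ofConjAct_toConjAct,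
    mul_inv_eq_iff_eq_mul] at hbst
  have hbxy : Commute b (x * y) := hbst
  have : Commute b (x⁻¹ * (x * y)) := (hbx.inv_right).mul_right hbxy
  rwa [inv_mul_cancel_left] at this

lemma pv_orderOf_of_mem_sylow {q : ℕ} [Fact q.Prime] (P : Sylow q G) {g : G}
    (hg : g ∈ P) : ∃ k, orderOf g = q ^ k := by
  obtain ⟨k, hk⟩ := IsPGroup.iff_orderOf.mp P.isPGroup' ⟨g, hg⟩
  refine ⟨k, ?_⟩
  rw [← hk]
  exact orderOf_injective ((P : Subgroup G).subtype) (Subgroup.subtype_injective _) ⟨g, hg⟩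

lemma pv_mem_sylow_of_orderOf [Finite G] {p : ℕ} [Fact p.Prime] (P : Sylow p G)
    (hP : (P : Subgroup G).Normal) {g : G} {k : ℕ} (hg : orderOf g = p ^ k) :
    g ∈ (P : Subgroup G) := by
  have h1 : IsPGroup p (Subgroup.zpowers g) :=
    IsPGroup.of_card (by rw [Nat.card_zpowers, hg])
  obtain ⟨Q, hQ⟩ := h1.exists_le_sylow
  haveI := Sylow.unique_of_normal P hP
  have hq : Q = P := Subsingleton.elim Q P
  rw [← hq]
  exact hQ (Subgroup.mem_zpowers g)

lemma pv_eq_top_of_sylows_le [Finite G] {H : Subgroup G}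
    (h : ∀ (q : ℕ), q.Prime → ∀ (Pq : Sylow q G), (Pq : Subgroup G) ≤ H) : H = ⊤ := by
  apply Subgroup.eq_top_of_card_eq
  have hHne : Nat.card H ≠ 0 := Nat.card_pos.ne'
  have hGne : Nat.card G ≠ 0 := Nat.card_pos.ne'
  apply Nat.dvd_antisymm (Subgroup.card_subgroup_dvd_card H)
  rw [← Nat.factorization_le_iff_dvd hGne hHne]
  apply (Finsupp.le_iff _ _).mpr
  intro q hq
  have hqp : q.Prime := Nat.prime_of_mem_primeFactors (Nat.support_factorization _ ▸ hq)
  haveI := Fact.mk hqp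
  have hd : q ^ (Nat.card G).factorization q ∣ Nat.card H := by
    rw [← Sylow.card_eq_multiplicity (default : Sylow q G)]
    exact Subgroup.card_dvd_of_le (h q hqp default)
  exact (Nat.Prime.pow_dvd_iff_le_factorization hqp hHne).mp hd

lemma pv_closure_comm {S : Set G} (hS : ∀ a ∈ S, ∀ b ∈ S, a * b = b * a) :
    ∀ x ∈ Subgroup.closure S, ∀ y ∈ Subgroup.closure S, x * y = y * x := by
  have h1 : Subgroup.closure S ≤ Subgroup.centralizer S := by
    rw [Subgroup.closure_le]
    intro a ha
    exact Subgroup.mem_centralizer_iff.mpr fun b hb => hS b hb a ha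
  have h2 : Subgroup.closure S ≤ Subgroup.centralizer (Subgroup.centralizer S) :=
    Subgroup.closure_le_centralizer_centralizer S
  intro x hx y hy
  exact (Subgroup.mem_centralizer_iff.mp (h2 hx) y (h1 hy)).symm

end PV


/-- If `(G, N)` is a generalized Camina pair with `G` finite nonabelian nilpotent and
`N < G`, then there is a prime `p` with `G/N` a `p`-group and `G = P × Q` (an internal
direct product) where `P` is a (necessarily Sylow) normal `p`-subgroup and `Q` is an
abelian normal `p'`-subgroup (a Hall `p'`-subgroup). -/
theorem isGCP_nilpotent_structure (G : Type) [Group G] [Finite G] [Group.IsNilpotent G]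
    (hna : ¬ ∀ a b : G, a * b = b * a) (N : Subgroup G) [N.Normal]
    (hlt : N < ⊤) (h : IsGCP G N) :
    ∃ p : ℕ, p.Prime ∧ IsPGroup p (G ⧸ N) ∧
      ∃ P Q : Subgroup G, P.Normal ∧ Q.Normal ∧ IsPGroup p P ∧
        Nat.Coprime (Nat.card Q) p ∧ (∀ x y : Q, x * y = y * x) ∧
        P.IsComplement' Q := by
  classical
  have hsyl : ∀ (q : ℕ) [Fact q.Prime] (Pq : Sylow q G), (Pq : Subgroup G).Normal :=
    fun q _ Pq => Sylow.normal_of_normalizerCondition normalizerCondition_of_isNilpotent Pq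
  -- the set of all prime power order elements
  set Sall : Set G := {g : G | ∃ q k : ℕ, q.Prime ∧ orderOf g = q ^ k} with hSall
  have hmemS : ∀ (q : ℕ), q.Prime → ∀ (Pq : Sylow q G), ∀ g ∈ (Pq : Subgroup G), g ∈ Sall := by
    intro q hq Pq g hg
    haveI := Fact.mk hq
    obtain ⟨k, hk⟩ := pv_orderOf_of_mem_sylow Pq hg
    exact ⟨q, k, hq, hk⟩
  have htop : Subgroup.closure Sall = ⊤ :=
    pv_eq_top_of_sylows_le fun q hq Pq g hg => Subgroup.subset_closure (hmemS q hq Pq g hg)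
  -- find a prime power element outside N
  have hnotsub : ¬ Sall ⊆ (N : Set G) := by
    intro hsub
    have : Subgroup.closure Sall ≤ N := (Subgroup.closure_le N).mpr hsub
    rw [htop] at this
    exact hlt.ne (le_antisymm hlt.le this)
  obtain ⟨x, hxS, hxN⟩ := Set.not_subset.mp hnotsub
  obtain ⟨p, kx, hp, hordx⟩ := hxS
  haveI := Fact.mk hp
  -- commuting across distinct primes
  have hcross : ∀ (q r : ℕ), q.Prime → r.Prime → q ≠ r → ∀ c d : G,
      (∃ k, orderOf c = q ^ k) → (∃ k, orderOf d = r ^ k) → Commute c d := by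
    intro q r hq hr hne c d hc hd
    haveI := Fact.mk hq
    haveI := Fact.mk hr
    obtain ⟨kc, hkc⟩ := hc
    obtain ⟨kd, hkd⟩ := hd
    exact Subgroup.commute_of_normal_of_disjoint _ _ (hsyl q default) (hsyl r default)
      (IsPGroup.disjoint_of_ne q r hne _ _ (default : Sylow q G).isPGroup'
        (default : Sylow r G).isPGroup')
      c d (pv_mem_sylow_of_orderOf _ (hsyl q default) hkc)
      (pv_mem_sylow_of_orderOf _ (hsyl r default) hkd)
  -- abelianness of q-parts for q different from the prime of a non-N element
  have habel : ∀ (z : G) (s : ℕ), s.Prime → (∃ k, orderOf z = s ^ k) → z ∉ N →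
      ∀ (q : ℕ), q.Prime → q ≠ s → ∀ c d : G,
      (∃ k, orderOf c = q ^ k) → (∃ k, orderOf d = q ^ k) → Commute d c := by
    intro z s hs hodz hzN q hq hne c d hc hd
    obtain ⟨ks, hks⟩ := hodz
    obtain ⟨kc, hkc⟩ := hc
    have hcop : (orderOf z).Coprime (orderOf c) := by
      rw [hks, hkc]
      exact ((Nat.coprime_primes hs hq).mpr (fun hh => hne hh.symm)).pow _ _
    have hzc : Commute z c := hcross s q hs hq (fun hh => hne hh.symm) z c ⟨ks, hks⟩ ⟨kc, hkc⟩
    have hdz : Commute d z := hcross q s hq hs hne d z hd ⟨ks, hks⟩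
    exact pv_key h hzN hcop hzc d hdz
  -- all p'-prime-power elements lie in N
  have hq_in_N : ∀ g : G, ∀ q k : ℕ, q.Prime → q ≠ p → orderOf g = q ^ k → g ∈ N := by
    intro g q kg hq hne hord
    by_contra hgN
    apply hna
    have hallcomm : ∀ a ∈ Sall, ∀ b ∈ Sall, a * b = b * a := by
      rintro a ⟨r, kr, hr, hra⟩ b ⟨s, ks2, hs, hsb⟩
      by_cases hrs : r = s
      · subst hrs
        by_cases hrp : r = p
        · subst hrp
          exact ((habel g q hq ⟨kg, hord⟩ hgN r hr (fun hh => hne hh.symm) a b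
            ⟨kr, hra⟩ ⟨ks2, hsb⟩).symm).eq
        · exact ((habel x p hp ⟨kx, hordx⟩ hxN r hr hrp a b
            ⟨kr, hra⟩ ⟨ks2, hsb⟩).symm).eq
      · exact (hcross r s hr hs hrs a b ⟨kr, hra⟩ ⟨ks2, hsb⟩).eq
    intro a b
    exact pv_closure_comm hallcomm a (htop ▸ Subgroup.mem_top a) b (htop ▸ Subgroup.mem_top b)
  -- Sylow q-subgroups for q ≠ p lie in N
  have hsylN : ∀ q : ℕ, q.Prime → q ≠ p → ∀ (Pq : Sylow q G), (Pq : Subgroup G) ≤ N := by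
    intro q hq hne Pq g hg
    haveI := Fact.mk hq
    obtain ⟨k, hk⟩ := pv_orderOf_of_mem_sylow Pq hg
    exact hq_in_N g q k hq hne hk
  -- G / N is a p-group
  have hNne : Nat.card N ≠ 0 := Nat.card_pos.ne'
  have hGne : Nat.card G ≠ 0 := Nat.card_pos.ne'
  have hInd : N.index ≠ 0 := Subgroup.index_ne_zero_of_finite
  have hNindex : ∀ {r : ℕ}, r.Prime → r ∣ N.index → r = p := by
    intro r hr hdvd
    by_contra hrp
    haveI := Fact.mk hr
    have h1 : r ^ (Nat.card G).factorization r ∣ Nat.card N := by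
      rw [← Sylow.card_eq_multiplicity (default : Sylow r G)]
      exact Subgroup.card_dvd_of_le (hsylN r hr hrp default)
    have e : Nat.card N * N.index = Nat.card G := Subgroup.card_mul_index N
    have e2 : (Nat.card G).factorization r
        = (Nat.card N).factorization r + (N.index).factorization r := by
      rw [← e, Nat.factorization_mul hNne hInd]
      simp
    have h2 : (Nat.card G).factorization r ≤ (Nat.card N).factorization r :=
      (Nat.Prime.pow_dvd_iff_le_factorization hr hNne).mp h1
    have h3 : 0 < (N.index).factorization r := hr.factorization_pos_of_dvd hInd hdvd
    omega
  have hpg : IsPGroup p (G ⧸ N) := by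
    apply IsPGroup.of_card
    rw [← Subgroup.index_eq_card]
    exact Nat.eq_prime_pow_of_unique_prime_dvd hInd fun hd hdvd => hNindex hd hdvd
  -- the Sylow p-subgroup and the complement
  set P : Sylow p G := default with hPdef
  have hPnorm : (P : Subgroup G).Normal := hsyl p P
  set Sq : Set G := {g : G | ∃ q k : ℕ, q.Prime ∧ q ≠ p ∧ orderOf g = q ^ k} with hSq
  set Q : Subgroup G := Subgroup.closure Sq with hQdef
  have hSqcomm : ∀ a ∈ Sq, ∀ b ∈ Sq, a * b = b * a := by
    rintro a ⟨r, kr, hr, hrp, hra⟩ b ⟨s, ks2, hs, hsp, hsb⟩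
    by_cases hrs : r = s
    · subst hrs
      exact ((habel x p hp ⟨kx, hordx⟩ hxN r hr hrp a b ⟨kr, hra⟩ ⟨ks2, hsb⟩).symm).eq
    · exact (hcross r s hr hs hrs a b ⟨kr, hra⟩ ⟨ks2, hsb⟩).eq
  have hQcomm : ∀ a ∈ Q, ∀ b ∈ Q, a * b = b * a := pv_closure_comm hSqcomm
  have hQnorm : Q.Normal := by
    constructor
    intro a ha g
    have hsub : (MulAut.conj g).toMonoidHom '' Sq ⊆ Sq := by
      rintro _ ⟨z, ⟨q, k, hq, hne, hord⟩, rfl⟩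
      refine ⟨q, k, hq, hne, ?_⟩
      rw [← hord]
      exact orderOf_injective (MulAut.conj g).toMonoidHom (MulAut.conj g).injective z
    have hmap : Subgroup.map (MulAut.conj g).toMonoidHom Q ≤ Q := by
      rw [hQdef, MonoidHom.map_closure]
      exact Subgroup.closure_mono hsub
    exact hmap ⟨a, ha, rfl⟩
  have hQord : ∀ g ∈ Q, ¬ (p ∣ orderOf g) := by
    intro g hg
    refine Subgroup.closure_induction ?_ ?_ ?_ ?_ hg
    · rintro a ⟨q, k, hq, hne, ho⟩ hdvd
      rw [ho] at hdvd
      exact hne ((Nat.prime_dvd_prime_iff_eq hp hq).mp (hp.dvd_of_dvd_pow hdvd)).symm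
    · simpa using hp.ne_one
    · intro a b ha hb iha ihb hdvd
      have hcomm : Commute a b := hQcomm a ha b hb
      have := hdvd.trans hcomm.orderOf_mul_dvd_mul_orderOf
      rcases (Nat.Prime.dvd_mul hp).mp this with h' | h'
      · exact iha h'
      · exact ihb h'
    · intro a ha iha hdvd
      rw [orderOf_inv] at hdvd
      exact iha hdvd
  have hcopQ : (Nat.card Q).Coprime p := by
    rw [Nat.coprime_comm]
    refine (Nat.Prime.coprime_iff_not_dvd hp).mpr ?_
    intro hdvd
    obtain ⟨g, hord⟩ := exists_prime_orderOf_dvd_card' (G := Q) p hdvd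
    apply hQord g g.2
    have : orderOf (g : G) = p := by
      rw [← hord]
      exact orderOf_injective Q.subtype (Subgroup.subtype_injective _) g
    rw [this]
  have hPrQ : ∀ q : ℕ, q.Prime → q ≠ p → ∀ (Pq : Sylow q G), (Pq : Subgroup G) ≤ Q := by
    intro q hq hne Pq g hg
    haveI := Fact.mk hq
    obtain ⟨k, hk⟩ := pv_orderOf_of_mem_sylow Pq hg
    exact Subgroup.subset_closure ⟨q, k, hq, hne, hk⟩
  have hcoprime : (Nat.card (P : Subgroup G)).Coprime (Nat.card Q) := by
    rw [Sylow.card_eq_multiplicity P]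
    exact Nat.Coprime.pow_left _ hcopQ.symm
  have hQne : Nat.card Q ≠ 0 := Nat.card_pos.ne'
  have hPne : Nat.card (P : Subgroup G) ≠ 0 := Nat.card_pos.ne'
  have hcardPQ : Nat.card (P : Subgroup G) * Nat.card Q = Nat.card G := by
    apply Nat.dvd_antisymm
    · exact Nat.Coprime.mul_dvd_of_dvd_of_dvd hcoprime
        (Subgroup.card_subgroup_dvd_card _) (Subgroup.card_subgroup_dvd_card _)
    · rw [← Nat.factorization_le_iff_dvd hGne (Nat.mul_ne_zero hPne hQne)]
      apply (Finsupp.le_iff _ _).mpr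
      intro r hr
      have hrp : r.Prime := Nat.prime_of_mem_primeFactors (Nat.support_factorization _ ▸ hr)
      haveI := Fact.mk hrp
      have key : r ^ (Nat.card G).factorization r ∣
          Nat.card (P : Subgroup G) * Nat.card Q := by
        by_cases hre : r = p
        · subst hre
          exact Dvd.dvd.mul_right (by rw [← Sylow.card_eq_multiplicity P]) _
        · refine Dvd.dvd.mul_left ?_ _
          rw [← Sylow.card_eq_multiplicity (default : Sylow r G)]
          exact Subgroup.card_dvd_of_le (hPrQ r hrp hre default)
      exact (Nat.Prime.pow_dvd_iff_le_factorization hrp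
        (Nat.mul_ne_zero hPne hQne)).mp key
  refine ⟨p, hp, hpg, (P : Subgroup G), Q, hPnorm, hQnorm, P.isPGroup', hcopQ, ?_, ?_⟩
  · intro a b
    exact Subtype.ext (hQcomm a a.2 b b.2)
  · exact Subgroup.isComplement'_of_coprime hcardPQ hcoprime
end

section
/- Let G be a finite nonabelian group and let M be a subgroup of G with V(G) < M (strict containment). Then [G, M] = G', the derived subgroup of G. -/
open CategoryTheory
open scoped commutatorElement

section Aux
open MonoidAlgebra Module

/-- Endomorphisms of a 1-dimensional space commute. -/
lemma endoCommAux {W : Type} [AddCommGroup W] [Module ℂ W]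
    (h1 : Module.finrank ℂ W = 1) (f g : W →ₗ[ℂ] W) (w : W) : f (g w) = g (f w) := by
  obtain ⟨v, -, hv⟩ := finrank_eq_one_iff'.mp h1
  obtain ⟨a, ha⟩ := hv (f v)
  obtain ⟨b, hb⟩ := hv (g v)
  obtain ⟨c, rfl⟩ := hv w
  have hfg : f (g v) = (b * a) • v := by rw [← hb, map_smul, ← ha, smul_smul]
  have hgf : g (f v) = (a * b) • v := by rw [← ha, map_smul, ← hb, smul_smul]
  simp only [map_smul, hfg, hgf, mul_comm]

/-- A finite-dimensional representation with no nontrivial invariant subspaces is a simple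
object of `FDRep`. -/
lemma simpleFDRepAux {G : Type} [Group G] {W : Type} [AddCommGroup W] [Module ℂ W]
    [FiniteDimensional ℂ W] [Nontrivial W] (ρ : Representation ℂ G W)
    (hs : ∀ p : Submodule ℂ W, (∀ g : G, ∀ w ∈ p, ρ g w ∈ p) → p = ⊥ ∨ p = ⊤) :
    Simple (FDRep.of ρ) := by
  constructor
  intro Y f hf
  constructor
  · intro hiso h0
    have hid : 𝟙 (FDRep.of ρ) = 0 := by
      rw [← IsIso.inv_hom_id f]
      set q := inv f with hq
      rw [h0, Limits.comp_zero]
    obtain ⟨w, hw⟩ := exists_ne (0 : W)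
    apply hw
    have := congrArg (fun ψ : FDRep.of ρ ⟶ FDRep.of ρ => ψ.hom w) hid
    exact this
  · intro hne
    have hcomm : ∀ (g : G) (y : Y), f.hom (Y.ρ g y) = ρ g (f.hom y) := by
      intro g y
      have := congrArg (fun ψ => ψ y) (f.comm g)
      exact this
    -- kernel is an invariant subspace of Y; use Mono to show it is trivial
    have hker : LinearMap.ker f.hom.hom.hom = ⊥ := by
      set K := LinearMap.ker f.hom.hom.hom with hK
      have hstab : ∀ g : G, ∀ y ∈ K, Y.ρ g y ∈ K := by
        intro g y hy
        have h0' : f.hom y = 0 := hy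
        have : f.hom (Y.ρ g y) = 0 := by rw [hcomm g y, h0', map_zero]
        exact this
      let ρK : Representation ℂ G K :=
        { toFun := fun g => (Y.ρ g).restrict (p := K) (q := K) (hstab g)
          map_one' := by
            ext x
            simp [LinearMap.restrict_coe_apply]
          map_mul' := by
            intro g h
            ext x
            show (((Y.ρ (g * h)).restrict (hstab (g * h))) x).1 =
              ((((Y.ρ g).restrict (hstab g))) ((((Y.ρ h).restrict (hstab h))) x)).1
            rw [LinearMap.restrict_coe_apply, LinearMap.restrict_coe_apply,
              LinearMap.restrict_coe_apply, map_mul, Module.End.mul_apply] }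
      let ι : FDRep.of ρK ⟶ Y :=
        ⟨FGModuleCat.ofHom K.subtype, fun g => by
          refine FGModuleCat.hom_ext (LinearMap.ext fun (x : ↥K) => ?_)
          exact LinearMap.restrict_coe_apply (Y.ρ g) (hstab g) x⟩
      have hcomp : ι ≫ f = 0 := by
        apply Action.Hom.ext
        refine FGModuleCat.hom_ext (LinearMap.ext fun x => ?_)
        show f.hom.hom.hom (K.subtype x) = 0
        exact x.2
      have hι : ι = 0 := by
        have : ι ≫ f = 0 ≫ f := by rw [hcomp, Limits.zero_comp]
        exact (cancel_mono f).mp this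
      ext y
      constructor
      · intro hy
        have := congrArg (fun ψ : FDRep.of ρK ⟶ Y => ψ.hom ⟨y, hy⟩) hι
        exact this
      · intro hy
        simp only [Submodule.mem_bot] at hy
        simp [hy]
    have hrange : LinearMap.range f.hom.hom.hom = ⊤ := by
      have hinv : ∀ g : G, ∀ w ∈ LinearMap.range f.hom.hom.hom,
          ρ g w ∈ LinearMap.range f.hom.hom.hom := by
        rintro g w ⟨y, rfl⟩
        exact ⟨Y.ρ g y, hcomm g y⟩
      rcases hs (LinearMap.range f.hom.hom.hom) (fun p => hinv p) with h | h
      · exfalso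
        apply hne
        ext y
        have : f.hom y ∈ LinearMap.range f.hom.hom.hom := ⟨y, rfl⟩
        rw [h] at this
        exact this
      · exact h
    let e : Y.V ≃ₗ[ℂ] W := LinearEquiv.ofBijective f.hom.hom.hom
      ⟨LinearMap.ker_eq_bot.mp hker, LinearMap.range_eq_top.mp hrange⟩
    have : IsIso f.hom := by
      refine ⟨⟨FGModuleCat.ofHom e.symm.toLinearMap, ?_, ?_⟩⟩
      · ext y
        exact e.symm_apply_apply y
      · ext w
        exact e.apply_symm_apply w
    infer_instance
end Aux

section Camina

open MonoidAlgebra Module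

lemma caminaAux {G : Type} [Group G] [Finite G] (m c : G)
    (hm : ∀ χ : G → ℂ, IsNonlinearIrrChar G χ → χ m = 0) (hc : c ∈ commutator G) :
    IsConj m (m * c) := by
  classical
  letI : Fintype G := Fintype.ofFinite G
  haveI : NeZero ((Fintype.card G : ℂ)) := ⟨Nat.cast_ne_zero.mpr Fintype.card_ne_zero⟩
  haveI : FiniteDimensional ℂ (MonoidAlgebra ℂ G) :=
    inferInstance
  set cl : Finset G := Finset.univ.filter (fun x => IsConj m x) with hcl
  set z : MonoidAlgebra ℂ G := ∑ x ∈ cl, MonoidAlgebra.single x (1 : ℂ) with hz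
  have z_apply : ∀ y : G, z.coeff y = if IsConj m y then 1 else 0 := by
    intro y
    rw [hz, MonoidAlgebra.coeff_sum, Finsupp.finset_sum_apply]
    rw [Finset.sum_congr rfl (fun x _ => MonoidAlgebra.coeff_single_apply)]
    rw [Finset.sum_ite_eq' cl y (fun _ => (1 : ℂ))]
    simp [hcl]
  have clmem : ∀ {x : G}, x ∈ cl ↔ IsConj m x := by
    intro x
    simp [hcl]
  have zc : ∀ h : G, MonoidAlgebra.single h (1 : ℂ) * z = z * MonoidAlgebra.single h 1 := by
    intro h
    rw [hz, Finset.mul_sum, Finset.sum_mul]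
    simp only [MonoidAlgebra.single_mul_single, one_mul, mul_one]
    refine Finset.sum_nbij' (i := fun x => h * x * h⁻¹) (j := fun x => h⁻¹ * x * h)
      ?_ ?_ ?_ ?_ ?_
    · intro x hx
      refine clmem.mpr ?_
      exact (clmem.mp hx).trans (isConj_iff.mpr ⟨h, rfl⟩)
    · intro x hx
      refine clmem.mpr ?_
      refine (clmem.mp hx).trans (isConj_iff.mpr ⟨h⁻¹, by group⟩)
    · intro x _
      group
    · intro x _
      group
    · intro x _
      congr 1
      group
  have zcomm : ∀ r : MonoidAlgebra ℂ G, z * r = r * z := by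
    intro r
    induction r using MonoidAlgebra.induction_linear with
    | zero => simp
    | add f g hf hg => rw [mul_add, add_mul, hf, hg]
    | single a b =>
        show z * MonoidAlgebra.single a b = MonoidAlgebra.single a b * z
        have hb : MonoidAlgebra.single a b = b • MonoidAlgebra.single a (1 : ℂ) := by
          rw [MonoidAlgebra.smul_single, smul_eq_mul, mul_one]
        rw [hb, mul_smul_comm, smul_mul_assoc, zc]
  -- the key dichotomy for each simple submodule of the group algebra
  have key : ∀ S : Submodule (MonoidAlgebra ℂ G) (MonoidAlgebra ℂ G),
      IsSimpleModule (MonoidAlgebra ℂ G) S →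
      ∃ t : ℂ, ∀ a ∈ S, z * a = t • (MonoidAlgebra.single m 1 * a)
        ∧ z * a = t • (MonoidAlgebra.single (m * c) 1 * a) := by
    intro S hS
    -- the subgroup of elements acting trivially on S
    let K : Subgroup G :=
      { carrier := {d | ∀ x ∈ S, MonoidAlgebra.single d (1 : ℂ) * x = x}
        one_mem' := by
          intro x _
          rw [← MonoidAlgebra.one_def, one_mul]
        mul_mem' := by
          intro d e hd he x hx
          have h1 : MonoidAlgebra.single (d * e) (1 : ℂ)
              = MonoidAlgebra.single d 1 * MonoidAlgebra.single e 1 := by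
            rw [MonoidAlgebra.single_mul_single, one_mul]
          rw [h1, mul_assoc, he x hx, hd x hx]
        inv_mem' := by
          intro d hd x hx
          have hmem : MonoidAlgebra.single d (1 : ℂ) * x ∈ S := S.smul_mem _ hx
          conv_lhs => rw [← hd x hx]
          rw [← mul_assoc, MonoidAlgebra.single_mul_single, one_mul, inv_mul_cancel,
            ← MonoidAlgebra.one_def, one_mul] }
    have hKmem : ∀ {d : G}, d ∈ K ↔ ∀ x ∈ S, MonoidAlgebra.single d (1 : ℂ) * x = x :=
      Iff.rfl
    by_cases hK : commutator G ≤ K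
    · -- "linear" case : all commutators act trivially
      refine ⟨(cl.card : ℂ), fun a ha => ?_⟩
      have hmc : ∀ d ∈ commutator G, MonoidAlgebra.single d (1 : ℂ) * a = a :=
        fun d hd => (hK hd) a ha
      have h1 : z * a = (cl.card : ℂ) • (MonoidAlgebra.single m 1 * a) := by
        rw [hz, Finset.sum_mul]
        rw [Finset.sum_congr rfl (fun x hx => ?_), Finset.sum_const,
          Nat.cast_smul_eq_nsmul ℂ]
        obtain ⟨u, hu⟩ := isConj_iff.mp (clmem.mp hx)
        have hd : m⁻¹ * x ∈ commutator G := by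
          have hco : (⁅m⁻¹, u⁆ : G) = m⁻¹ * x := by
            rw [← hu]; group
          rw [← hco]
          exact Subgroup.commutator_mem_commutator (Subgroup.mem_top _) (Subgroup.mem_top _)
        have hx' : MonoidAlgebra.single x (1 : ℂ)
            = MonoidAlgebra.single m 1 * MonoidAlgebra.single (m⁻¹ * x) 1 := by
          rw [MonoidAlgebra.single_mul_single, one_mul, mul_inv_cancel_left]
        rw [hx', mul_assoc, hmc _ hd]
      have h2 : MonoidAlgebra.single (m * c) (1 : ℂ) * a = MonoidAlgebra.single m 1 * a := by
        have hmc' : MonoidAlgebra.single (m * c) (1 : ℂ)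
            = MonoidAlgebra.single m 1 * MonoidAlgebra.single c 1 := by
          rw [MonoidAlgebra.single_mul_single, one_mul]
        rw [hmc', mul_assoc, hmc c hc]
      exact ⟨h1, by rw [h2]; exact h1⟩
    · -- "nonlinear" case : the action of `z` on `S` is zero
      set W := S.restrictScalars ℂ with hW
      haveI hnt : Nontrivial ↥W := IsSimpleModule.nontrivial (MonoidAlgebra ℂ G) ↥S
      haveI : FiniteDimensional ℂ ↥W := inferInstance
      have hstabW : ∀ h : G, ∀ x ∈ W, MonoidAlgebra.single h (1 : ℂ) * x ∈ W := by
        intro h x hx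
        exact S.smul_mem _ hx
      let ρ : Representation ℂ G ↥W :=
        { toFun := fun h => (LinearMap.mulLeft ℂ (MonoidAlgebra.single h (1 : ℂ))).restrict
            (p := W) (q := W) (hstabW h)
          map_one' := by
            refine LinearMap.ext fun x => ?_
            refine Subtype.ext ?_
            show ((LinearMap.mulLeft ℂ (MonoidAlgebra.single (1 : G) (1 : ℂ))).restrict
              (hstabW 1) x).1 = (x : MonoidAlgebra ℂ G)
            show MonoidAlgebra.single (1 : G) (1 : ℂ) * (x : MonoidAlgebra ℂ G) = x
            rw [← MonoidAlgebra.one_def, one_mul]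
          map_mul' := by
            intro g h
            refine LinearMap.ext fun x => ?_
            refine Subtype.ext ?_
            show ((LinearMap.mulLeft ℂ (MonoidAlgebra.single (g * h) (1 : ℂ))).restrict
                (hstabW (g * h)) x).1
              = ((LinearMap.mulLeft ℂ (MonoidAlgebra.single g (1 : ℂ))).restrict (hstabW g)
                  ((LinearMap.mulLeft ℂ (MonoidAlgebra.single h (1 : ℂ))).restrict
                    (hstabW h) x)).1
            show MonoidAlgebra.single (g * h) (1 : ℂ) * (x : MonoidAlgebra ℂ G)
              = MonoidAlgebra.single g 1 * (MonoidAlgebra.single h 1 * (x : MonoidAlgebra ℂ G))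
            rw [← mul_assoc, MonoidAlgebra.single_mul_single, one_mul] }
      have ρcoe : ∀ (h : G) (x : ↥W),
          (ρ h x : MonoidAlgebra ℂ G) = MonoidAlgebra.single h 1 * (x : MonoidAlgebra ℂ G) :=
        fun h x => LinearMap.restrict_coe_apply
          (LinearMap.mulLeft ℂ (MonoidAlgebra.single h (1 : ℂ))) (hstabW h) x
      -- invariant subspaces of `ρ` are trivial
      have hsub : ∀ p : Submodule ℂ ↥W, (∀ g : G, ∀ w ∈ p, ρ g w ∈ p) → p = ⊥ ∨ p = ⊤ := by
        intro p hp
        have hJst : ∀ (g : G) (v : MonoidAlgebra ℂ G), v ∈ p.map W.subtype →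
            MonoidAlgebra.of ℂ G g • v ∈ p.map W.subtype := by
          rintro g v ⟨w, hw, rfl⟩
          refine ⟨ρ g w, hp g w hw, ?_⟩
          show (ρ g w : MonoidAlgebra ℂ G) = MonoidAlgebra.of ℂ G g • (w : MonoidAlgebra ℂ G)
          rw [ρcoe]
          rfl
        let q : Submodule (MonoidAlgebra ℂ G) (MonoidAlgebra ℂ G) :=
          MonoidAlgebra.submoduleOfSMulMem (p.map W.subtype) hJst
        have hq : ∀ {v : MonoidAlgebra ℂ G}, v ∈ q ↔ v ∈ p.map W.subtype := Iff.rfl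
        haveI := hS
        rcases eq_bot_or_eq_top (Submodule.comap S.subtype q) with hbot | htop
        · left
          ext w
          simp only [Submodule.mem_bot]
          constructor
          · intro hw
            have hwS : (w : MonoidAlgebra ℂ G) ∈ S := w.2
            have hmem : (⟨(w : MonoidAlgebra ℂ G), hwS⟩ : ↥S) ∈ Submodule.comap S.subtype q :=
              hq.mpr ⟨w, hw, rfl⟩
            rw [hbot] at hmem
            have h0 : (⟨(w : MonoidAlgebra ℂ G), hwS⟩ : ↥S) = 0 := hmem
            exact Subtype.ext (congrArg Subtype.val h0)
          · intro hw
            rw [hw]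
            exact p.zero_mem
        · right
          ext w
          simp only [Submodule.mem_top, iff_true]
          have hwS : (w : MonoidAlgebra ℂ G) ∈ S := w.2
          have hmem : (⟨(w : MonoidAlgebra ℂ G), hwS⟩ : ↥S) ∈ Submodule.comap S.subtype q := by
            rw [htop]
            trivial
          obtain ⟨w', hw', hww⟩ := hq.mp hmem
          have hww' : w' = w := Subtype.ext hww
          rwa [← hww']
      haveI hsimple : Simple (FDRep.of ρ) := simpleFDRepAux ρ hsub
      have hfr1 : 0 < finrank ℂ ↥W := finrank_pos
      have hfr : 1 < finrank ℂ ↥W := by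
        rcases Nat.lt_or_ge 1 (finrank ℂ ↥W) with h | h
        · exact h
        · exfalso
          apply hK
          have h1 : finrank ℂ ↥W = 1 := le_antisymm h hfr1
          rw [commutator_eq_closure, Subgroup.closure_le]
          rintro d ⟨a, b, rfl⟩
          show ∀ x ∈ S, MonoidAlgebra.single (⁅a, b⁆ : G) (1 : ℂ) * x = x
          intro x hx
          have hxW : x ∈ W := hx
          have collapse : ∀ (u : G) (v : ↥W), ρ u (ρ u⁻¹ v) = v := by
            intro u v
            rw [← Module.End.mul_apply, ← map_mul, mul_inv_cancel, map_one, Module.End.one_apply]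
          have swap : ∀ v : ↥W, ρ b (ρ a⁻¹ v) = ρ a⁻¹ (ρ b v) :=
            endoCommAux h1 (ρ b) (ρ a⁻¹)
          have main : ρ (⁅a, b⁆ : G) ⟨x, hxW⟩ = ⟨x, hxW⟩ := by
            have e1 : (⁅a, b⁆ : G) = a * (b * (a⁻¹ * b⁻¹)) := by group
            rw [e1, map_mul, map_mul, map_mul]
            simp only [Module.End.mul_apply]
            rw [swap, collapse, collapse]
          have hfin := congrArg Subtype.val main
          rwa [ρcoe] at hfin
      -- the character of `FDRep.of ρ` vanishes at `m`
      have hchi : (FDRep.of ρ).character m = 0 := by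
        refine hm _ ⟨FDRep.of ρ, hsimple, ?_, rfl⟩
        exact hfr
      -- multiplication by `z` as an endomorphism in `FDRep`
      have hzstab : ∀ x ∈ W, z * x ∈ W := fun x hx => S.smul_mem z hx
      let φhom : ↥W →ₗ[ℂ] ↥W := (LinearMap.mulLeft ℂ z).restrict (p := W) (q := W) hzstab
      have φcoe : ∀ x : ↥W, (φhom x : MonoidAlgebra ℂ G) = z * (x : MonoidAlgebra ℂ G) :=
        fun x => LinearMap.restrict_coe_apply (LinearMap.mulLeft ℂ z) hzstab x
      let φ : FDRep.of ρ ⟶ FDRep.of ρ :=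
        ⟨FGModuleCat.ofHom φhom, by
          intro g
          refine FGModuleCat.hom_ext (LinearMap.ext fun (x : ↥W) => ?_)
          refine Subtype.ext ?_
          show (φhom (ρ g x) : MonoidAlgebra ℂ G) = (ρ g (φhom x) : MonoidAlgebra ℂ G)
          rw [φcoe, ρcoe, ρcoe, φcoe, ← mul_assoc, zcomm, mul_assoc]⟩
      obtain ⟨t, ht⟩ := CategoryTheory.endomorphism_simple_eq_smul_id (𝕜 := ℂ) φ
      have hexp : φhom = ∑ x ∈ cl, ρ x := by
        refine LinearMap.ext fun (x : ↥W) => ?_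
        refine Subtype.ext ?_
        rw [φcoe]
        have hcoe : (((∑ y ∈ cl, ρ y : ↥W →ₗ[ℂ] ↥W)) x : MonoidAlgebra ℂ G)
            = ∑ y ∈ cl, (ρ y x : MonoidAlgebra ℂ G) := by
          rw [LinearMap.sum_apply, AddSubmonoidClass.coe_finset_sum]
        rw [hcoe, hz, Finset.sum_mul]
        exact Finset.sum_congr rfl fun y _ => (ρcoe y x).symm
      have htr : LinearMap.trace ℂ ↥W φhom = (cl.card : ℂ) * (FDRep.of ρ).character m := by
        rw [hexp, map_sum]
        rw [Finset.sum_congr rfl (fun x hx => ?_), Finset.sum_const, nsmul_eq_mul]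
        obtain ⟨u, hu⟩ := isConj_iff.mp (clmem.mp hx)
        have hcc : (FDRep.of ρ).character x = (FDRep.of ρ).character m := by
          rw [← hu]
          exact FDRep.char_conj (FDRep.of ρ) m u
        rw [← hcc]
        rfl
      have ht2 : t * (finrank ℂ ↥W : ℂ) = 0 := by
        have h1 : LinearMap.trace ℂ ↥W ((t • 𝟙 (FDRep.of ρ)).hom.hom.hom) = t * (finrank ℂ ↥W : ℂ) := by
          have hsm : (t • 𝟙 (FDRep.of ρ)).hom.hom.hom = t • (LinearMap.id : ↥W →ₗ[ℂ] ↥W) := rfl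
          rw [hsm, map_smul, LinearMap.trace_id, smul_eq_mul]
        calc t * (finrank ℂ ↥W : ℂ)
            = LinearMap.trace ℂ ↥W ((t • 𝟙 (FDRep.of ρ)).hom.hom.hom) := h1.symm
          _ = LinearMap.trace ℂ ↥W φhom := by rw [ht]; rfl
          _ = (cl.card : ℂ) * (FDRep.of ρ).character m := htr
          _ = 0 := by rw [hchi, mul_zero]
      have htzero : t = 0 := by
        rcases mul_eq_zero.mp ht2 with h | h
        · exact h
        · exact absurd h (Nat.cast_ne_zero.mpr hfr1.ne')
      refine ⟨0, fun a ha => ?_⟩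
      have haW : a ∈ W := ha
      have h0 : z * a = 0 := by
        have h3 := congrArg
          (fun ψ : FDRep.of ρ ⟶ FDRep.of ρ => (show ↥W from ψ.hom ⟨a, haW⟩).1) ht
        simp only at h3
        have h4 : (show ↥W from (t • 𝟙 (FDRep.of ρ)).hom ⟨a, haW⟩).1 = t • a := rfl
        rw [h4, htzero, zero_smul] at h3
        rw [← φcoe ⟨a, haW⟩]
        exact h3.symm
      constructor
      · rw [zero_smul]
        exact h0
      · rw [zero_smul]
        exact h0
  -- decompose 1 into a finite sum of elements of simple submodules
  have hone : (1 : MonoidAlgebra ℂ G) ∈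
      sSup {S : Submodule (MonoidAlgebra ℂ G) (MonoidAlgebra ℂ G) |
        IsSimpleModule (MonoidAlgebra ℂ G) S} := by
    rw [IsSemisimpleModule.sSup_simples_eq_top]
    trivial
  have hspan : sSup {S : Submodule (MonoidAlgebra ℂ G) (MonoidAlgebra ℂ G) |
        IsSimpleModule (MonoidAlgebra ℂ G) S}
      = Submodule.span (MonoidAlgebra ℂ G)
        (⋃ S ∈ {S : Submodule (MonoidAlgebra ℂ G) (MonoidAlgebra ℂ G) |
          IsSimpleModule (MonoidAlgebra ℂ G) S}, (S : Set (MonoidAlgebra ℂ G))) := by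
    apply le_antisymm
    · refine sSup_le fun p hp => ?_
      intro x hx
      exact Submodule.subset_span (Set.mem_biUnion hp hx)
    · rw [Submodule.span_le]
      refine Set.iUnion₂_subset fun p hp => ?_
      intro x hx
      exact (le_sSup hp) hx
  rw [hspan, Submodule.mem_span_set'] at hone
  obtain ⟨n, f, gv, hsum⟩ := hone
  choose T hT hmemT using fun i => Set.mem_iUnion₂.mp (gv i).2
  set aa : Fin n → MonoidAlgebra ℂ G := fun i => f i • (gv i : MonoidAlgebra ℂ G) with haa
  have haT : ∀ i, aa i ∈ T i := fun i => (T i).smul_mem _ (hmemT i)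
  choose t htprop using fun i => key (T i) (hT i)
  have hsum' : ∑ i, aa i = 1 := hsum
  have e1 : z = ∑ i, t i • (MonoidAlgebra.single m 1 * aa i) := by
    calc z = z * 1 := (mul_one z).symm
    _ = ∑ i, z * aa i := by rw [← hsum', Finset.mul_sum]
    _ = _ := Finset.sum_congr rfl fun i _ => (htprop i (aa i) (haT i)).1
  have e2 : z = ∑ i, t i • (MonoidAlgebra.single (m * c) 1 * aa i) := by
    calc z = z * 1 := (mul_one z).symm
    _ = ∑ i, z * aa i := by rw [← hsum', Finset.mul_sum]
    _ = _ := Finset.sum_congr rfl fun i _ => (htprop i (aa i) (haT i)).2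
  have ev : ∀ (g : G), (∑ i, t i • (MonoidAlgebra.single g (1 : ℂ) * aa i)).coeff g
      = ∑ i, t i * (aa i).coeff 1 := by
    intro g
    rw [MonoidAlgebra.coeff_sum, Finsupp.finset_sum_apply]
    refine Finset.sum_congr rfl fun i _ => ?_
    rw [MonoidAlgebra.coeff_smul_apply, smul_eq_mul, MonoidAlgebra.coeff_single_mul_apply, one_mul,
      inv_mul_cancel]
  have hzm : z.coeff m = z.coeff (m * c) := by
    conv_lhs => rw [e1]
    conv_rhs => rw [e2]
    rw [ev m, ev (m * c)]
  rw [z_apply, z_apply, if_pos (IsConj.refl m)] at hzm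
  by_contra hcon
  rw [if_neg hcon] at hzm
  exact one_ne_zero hzm

end Camina

/-- If `G` is a finite nonabelian group and `M` is a subgroup with `V(G) < M`,
then `[G, M] = G'`. -/
theorem commutator_eq_of_vanishingOff_lt (G : Type) [Group G] [Finite G]
    (hna : ¬ ∀ a b : G, a * b = b * a) (M : Subgroup G) (hM : vanishingOff G < M) :
    ⁅(⊤ : Subgroup G), M⁆ = commutator G := by
  apply le_antisymm
  · calc ⁅(⊤ : Subgroup G), M⁆ ≤ ⁅(⊤ : Subgroup G), ⊤⁆ := Subgroup.commutator_mono le_rfl le_top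
    _ = commutator G := rfl
  · intro c hcmem
    obtain ⟨m, hmM, hmV⟩ := SetLike.exists_of_lt hM
    have hm : ∀ χ : G → ℂ, IsNonlinearIrrChar G χ → χ m = 0 := by
      intro χ hχ
      by_contra h
      exact hmV (Subgroup.subset_closure ⟨χ, hχ, h⟩)
    obtain ⟨u, hu⟩ := isConj_iff.mp (caminaAux m c hm hcmem)
    have hcc : c = ⁅m⁻¹, u⁆ := by
      calc c = m⁻¹ * (m * c) := by group
      _ = m⁻¹ * (u * m * u⁻¹) := by rw [← hu]
      _ = ⁅m⁻¹, u⁆ := by rw [commutatorElement_def]; group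
    rw [hcc, Subgroup.commutator_comm]
    exact Subgroup.commutator_mem_commutator (Subgroup.inv_mem M hmM) (Subgroup.mem_top u)
end

section
/- Let N be a normal subgroup of a finite group G such that the quotient G/N is nonabelian. Then N ≤ V(G) and V(G/N) ≤ V(G)/N. -/
open CategoryTheory

namespace VOAux
open CategoryTheory
noncomputable section
set_option linter.unusedSectionVars false

variable {H : Type} [Group H]

theorem rho_rho {V : FDRep ℂ H} (g h : H) (x : V) : V.ρ g (V.ρ h x) = V.ρ (g * h) x := by
  rw [map_mul]; rfl

/-- Maschke: an invariant subspace of a f.d. complex rep of a finite group has an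
invariant complement. -/
theorem exists_invariant_compl [Fintype H] (V : FDRep ℂ H) (p : Submodule ℂ V)
    (hp : ∀ g : H, ∀ x ∈ p, V.ρ g x ∈ p) :
    ∃ q : Submodule ℂ V, (∀ g : H, ∀ x ∈ q, V.ρ g x ∈ q) ∧ IsCompl p q := by
  obtain ⟨q₀, hq₀⟩ := Submodule.exists_isCompl p
  set π : V →ₗ[ℂ] V := p.subtype ∘ₗ p.projectionOnto q₀ hq₀ with hπ
  have hπ_mem : ∀ x, π x ∈ p := fun x => (p.projectionOnto q₀ hq₀ x).2
  have hπ_id : ∀ x ∈ p, π x = x := fun x hx => by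
    simp [hπ, Submodule.projectionOnto_apply_left hq₀ ⟨x, hx⟩]
  set e : V →ₗ[ℂ] V :=
    (Fintype.card H : ℂ)⁻¹ • ∑ g : H, (V.ρ g⁻¹) ∘ₗ π ∘ₗ (V.ρ g) with he
  have hcard : (Fintype.card H : ℂ) ≠ 0 := Nat.cast_ne_zero.mpr Fintype.card_ne_zero
  have he_apply : ∀ x, e x = (Fintype.card H : ℂ)⁻¹ • ∑ g : H, V.ρ g⁻¹ (π (V.ρ g x)) := by
    intro x; simp [he, LinearMap.sum_apply]
  have he_mem : ∀ x, e x ∈ p := by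
    intro x; rw [he_apply]
    exact Submodule.smul_mem _ _ (Submodule.sum_mem _ (fun g _ => hp g⁻¹ _ (hπ_mem _)))
  have he_id : ∀ x ∈ p, e x = x := by
    intro x hx; rw [he_apply]
    have : ∀ g : H, V.ρ g⁻¹ (π (V.ρ g x)) = x := by
      intro g
      rw [hπ_id _ (hp g x hx), rho_rho, inv_mul_cancel, map_one, Module.End.one_apply]
    rw [Finset.sum_congr rfl (fun g _ => this g), Finset.sum_const, Finset.card_univ,
      ← Nat.cast_smul_eq_nsmul ℂ, smul_smul, inv_mul_cancel₀ hcard, one_smul]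
  have he_comm : ∀ h : H, ∀ x, e (V.ρ h x) = V.ρ h (e x) := by
    intro h x
    rw [he_apply, he_apply, map_smul, map_sum]
    congr 1
    refine Fintype.sum_bijective (· * h) (Group.mulRight_bijective h) _ _ fun g => ?_
    show V.ρ g⁻¹ (π (V.ρ g (V.ρ h x))) = V.ρ h (V.ρ (g*h)⁻¹ (π (V.ρ (g*h) x)))
    rw [rho_rho g h, rho_rho h, show h * (g * h)⁻¹ = g⁻¹ by group]
  refine ⟨LinearMap.ker e, ?_, ?_, ?_⟩
  · intro g x hx
    simp only [LinearMap.mem_ker] at *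
    rw [he_comm, hx, map_zero]
  · rw [disjoint_iff_inf_le]
    rintro x ⟨hx1, hx2⟩
    have := he_id x hx1
    rw [LinearMap.mem_ker.mp hx2] at this
    exact this.symm
  · rw [codisjoint_iff_le_sup]
    intro x _
    have h1 : e x ∈ p := he_mem x
    have h2 : x - e x ∈ LinearMap.ker e := by
      rw [LinearMap.mem_ker, map_sub, he_id _ h1, sub_self]
    have hx : x = e x + (x - e x) := by abel
    rw [hx]
    exact Submodule.add_mem_sup h1 h2

def subRep (V : FDRep ℂ H) (p : Submodule ℂ V) (hp : ∀ g : H, ∀ x ∈ p, V.ρ g x ∈ p) :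
    Representation ℂ H p where
  toFun g := (V.ρ g).restrict (hp g)
  map_one' := by ext x; simp [LinearMap.restrict_apply]
  map_mul' g h := by ext x; simp [LinearMap.restrict_apply]

def subFDRep (V : FDRep ℂ H) (p : Submodule ℂ V) (hp : ∀ g : H, ∀ x ∈ p, V.ρ g x ∈ p) :
    FDRep ℂ H := FDRep.of (subRep V p hp)

def subIncl (V : FDRep ℂ H) (p : Submodule ℂ V) (hp : ∀ g : H, ∀ x ∈ p, V.ρ g x ∈ p) :
    subFDRep V p hp ⟶ V where
  hom := ObjectProperty.homMk (ModuleCat.ofHom p.subtype)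
  comm g := by ext x; rfl

theorem hom_comm {V W : FDRep ℂ H} (f : V ⟶ W) (g : H) (x : V) :
    f.hom (V.ρ g x) = W.ρ g (f.hom x) := ConcreteCategory.congr_hom (f.comm g) x

theorem simple_of_irreducible (V : FDRep ℂ H) (h0 : 0 < Module.finrank ℂ V)
    (hirr : ∀ p : Submodule ℂ V, (∀ g : H, ∀ x ∈ p, V.ρ g x ∈ p) → p = ⊥ ∨ p = ⊤) :
    Simple V := by
  have : Nontrivial V := Module.nontrivial_of_finrank_pos h0
  constructor
  intro Y f hf
  constructor
  · intro hiso hfz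
    obtain ⟨v, hv⟩ := exists_ne (0 : V)
    have h1 : (inv f) ≫ f = 𝟙 V := IsIso.inv_hom_id f
    have h2 : (ConcreteCategory.hom f.hom : Y →ₗ[ℂ] V) = 0 := by rw [hfz]; rfl
    have h3 : v = (ConcreteCategory.hom f.hom : Y →ₗ[ℂ] V) ((inv f).hom v) :=
      by
        have h4 := ConcreteCategory.congr_hom (congrArg Action.Hom.hom h1) v
        simp only [Action.comp_hom, Action.id_hom, ConcreteCategory.comp_apply,
          ConcreteCategory.id_apply] at h4
        exact h4.symm
    rw [h2] at h3
    exact hv h3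
  · intro hfz
    have hinj : Function.Injective (ConcreteCategory.hom f.hom : Y →ₗ[ℂ] V) := by
      rw [← LinearMap.ker_eq_bot]
      have hinv : ∀ g : H, ∀ x ∈ LinearMap.ker (ConcreteCategory.hom f.hom : Y →ₗ[ℂ] V),
          Y.ρ g x ∈ LinearMap.ker (ConcreteCategory.hom f.hom : Y →ₗ[ℂ] V) := fun g x hx =>
        LinearMap.mem_ker.mpr ((hom_comm f g x).trans
          (by rw [LinearMap.mem_ker.mp hx, map_zero]))
      set ι := subIncl Y _ hinv with hιdef
      have hι : ι ≫ f = 0 := by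
        apply Action.hom_ext
        ext x
        exact x.2
      have hι0 : ι = 0 := (Preadditive.mono_iff_cancel_zero f).mp hf _ ι hι
      have hh : ι.hom.hom.hom = 0 := by rw [hι0]; rfl
      rw [eq_bot_iff]
      intro x hx
      exact LinearMap.congr_fun hh ⟨x, hx⟩
    have hsurj : Function.Surjective (ConcreteCategory.hom f.hom : Y →ₗ[ℂ] V) := by
      rw [← LinearMap.range_eq_top]
      have hinv : ∀ g : H, ∀ x ∈ LinearMap.range (ConcreteCategory.hom f.hom : Y →ₗ[ℂ] V),
          V.ρ g x ∈ LinearMap.range (ConcreteCategory.hom f.hom : Y →ₗ[ℂ] V) := by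
        rintro g _ ⟨y, rfl⟩
        exact ⟨Y.ρ g y, hom_comm f g y⟩
      rcases hirr _ hinv with h | h
      · exfalso
        apply hfz
        apply Action.hom_ext
        ext y
        have : f.hom.hom.hom y ∈ LinearMap.range (ConcreteCategory.hom f.hom : Y →ₗ[ℂ] V) := ⟨y, rfl⟩
        rw [h] at this
        simpa using this
      · exact h
    set e : Y ≃ₗ[ℂ] V := LinearEquiv.ofBijective (ConcreteCategory.hom f.hom : Y →ₗ[ℂ] V) ⟨hinj, hsurj⟩ with he
    refine ⟨⟨⟨ObjectProperty.homMk (ModuleCat.ofHom (e.symm : V →ₗ[ℂ] Y)), ?_⟩, ?_, ?_⟩⟩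
    · intro g
      ext x
      show e.symm (V.ρ g x) = Y.ρ g (e.symm x)
      apply hinj
      show (ConcreteCategory.hom f.hom : Y →ₗ[ℂ] V) (e.symm (V.ρ g x)) = (ConcreteCategory.hom f.hom : Y →ₗ[ℂ] V) (Y.ρ g (e.symm x))
      rw [hom_comm]
      rw [show (ConcreteCategory.hom f.hom : Y →ₗ[ℂ] V) (e.symm (V.ρ g x)) = e (e.symm (V.ρ g x)) from rfl,
        show (ConcreteCategory.hom f.hom : Y →ₗ[ℂ] V) (e.symm x) = e (e.symm x) from rfl,
        e.apply_symm_apply, e.apply_symm_apply]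
    · apply Action.hom_ext
      ext y
      show e.symm (e y) = y
      exact e.symm_apply_apply y
    · apply Action.hom_ext
      ext x
      show e (e.symm x) = x
      exact e.apply_symm_apply x

theorem finrank_pos_of_simple (V : FDRep ℂ H) [hs : Simple V] : 0 < Module.finrank ℂ V := by
  by_contra h
  push_neg at h
  have h0 : Module.finrank ℂ V = 0 := Nat.le_zero.mp h
  have hss : Subsingleton V := Module.finrank_zero_iff.mp h0
  have : (𝟙 V : V ⟶ V) = 0 := by
    apply Action.hom_ext
    ext x
    exact Subsingleton.elim _ _
  exact CategoryTheory.id_nonzero V this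

theorem irreducible_of_simple (V : FDRep ℂ H) [hs : Simple V]
    (p : Submodule ℂ V) (hp : ∀ g : H, ∀ x ∈ p, V.ρ g x ∈ p) : p = ⊥ ∨ p = ⊤ := by
  by_cases hb : p = ⊥
  · exact Or.inl hb
  right
  set ι := subIncl V p hp with hιdef
  have hmono : Mono ι := by
    apply Preadditive.mono_of_cancel_zero
    intro P g hg
    have hgh : p.subtype ∘ₗ g.hom.hom.hom = 0 := congrArg (fun k => k.hom.hom.hom) hg
    apply Action.hom_ext
    ext x
    exact Subtype.ext (LinearMap.congr_fun hgh x)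
  have hne : ι ≠ 0 := by
    intro h
    apply hb
    have hh : ι.hom.hom.hom = 0 := by rw [h]; rfl
    rw [eq_bot_iff]
    intro x hx
    exact LinearMap.congr_fun hh ⟨x, hx⟩
  have hiso : IsIso ι := (Simple.mono_isIso_iff_nonzero ι).mpr hne
  rw [eq_top_iff]
  intro x _
  have hsurj : ∃ y : p, ι.hom.hom.hom y = x := by
    refine ⟨(inv ι).hom x, ?_⟩
    exact ConcreteCategory.congr_hom (IsIso.inv_hom_id ι) x
  obtain ⟨y, hy⟩ := hsurj
  exact hy ▸ y.2

theorem rho_comm_of_dim_le_one [Fintype H]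
    (hyp : ∀ V : FDRep ℂ H, Simple V → Module.finrank ℂ V ≤ 1) :
    ∀ (n : ℕ) (V : FDRep ℂ H), Module.finrank ℂ V = n →
      ∀ (g h : H) (x : V), V.ρ g (V.ρ h x) = V.ρ h (V.ρ g x) := by
  intro n
  induction n using Nat.strong_induction_on with
  | _ n IH =>
    intro V hn g h x
    by_cases hirr : ∀ p : Submodule ℂ V, (∀ g : H, ∀ x ∈ p, V.ρ g x ∈ p) → p = ⊥ ∨ p = ⊤
    · rcases Nat.eq_zero_or_pos n with h0 | h0
      · have hss : Subsingleton V := Module.finrank_zero_iff.mp (hn.trans h0)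
        exact Subsingleton.elim _ _
      · have hs : Simple V := simple_of_irreducible V (hn ▸ h0) hirr
        have h1 : Module.finrank ℂ V = 1 := le_antisymm (hyp V hs)
          (by rw [hn]; exact h0)
        obtain ⟨v, hv0, hv⟩ := finrank_eq_one_iff'.mp h1
        obtain ⟨c, hc⟩ := hv x
        obtain ⟨a, ha⟩ := hv (V.ρ g v)
        obtain ⟨b, hb⟩ := hv (V.ρ h v)
        have key : V.ρ g (V.ρ h v) = V.ρ h (V.ρ g v) := by
          conv_lhs => rw [← hb, map_smul, ← ha]
          conv_rhs => rw [← ha, map_smul, ← hb]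
          rw [smul_comm]
        rw [← hc, map_smul, map_smul, map_smul, map_smul, key]
    · push_neg at hirr
      obtain ⟨p, hp, hpb, hpt⟩ := hirr
      obtain ⟨q, hq, hcompl⟩ := exists_invariant_compl V p hp
      have hpn : Module.finrank ℂ p < n := by
        rw [← hn]; exact Submodule.finrank_lt hpt
      have hqt : q ≠ ⊤ := by
        intro hq'
        apply hpb
        have := hcompl.disjoint
        rw [hq', disjoint_top] at this
        exact this
      have hqn : Module.finrank ℂ q < n := by
        rw [← hn]; exact Submodule.finrank_lt hqt
      have hcp : ∀ y ∈ p, V.ρ g (V.ρ h y) = V.ρ h (V.ρ g y) := by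
        intro y hy
        have := IH _ hpn (subFDRep V p hp) rfl g h ⟨y, hy⟩
        exact congrArg Subtype.val this
      have hcq : ∀ y ∈ q, V.ρ g (V.ρ h y) = V.ρ h (V.ρ g y) := by
        intro y hy
        have := IH _ hqn (subFDRep V q hq) rfl g h ⟨y, hy⟩
        exact congrArg Subtype.val this
      have hx : x ∈ p ⊔ q := by rw [hcompl.sup_eq_top]; trivial
      obtain ⟨a, ha, b, hb, rfl⟩ := Submodule.mem_sup.mp hx
      simp only [map_add, hcp a ha, hcq b hb]

theorem exists_nonlinear_simple [Fintype H] (hna : ¬ ∀ x y : H, x * y = y * x) :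
    ∃ V : FDRep ℂ H, Simple V ∧ 1 < Module.finrank ℂ V := by
  by_contra hcon
  push_neg at hcon
  apply hna
  intro a b
  have hyp : ∀ V : FDRep ℂ H, Simple V → Module.finrank ℂ V ≤ 1 := fun V hV => by
    have := hcon V hV; omega
  haveI : FiniteDimensional ℂ (H →₀ ℂ) :=
    Module.Finite.equiv (Finsupp.linearEquivFunOnFinite ℂ ℂ H).symm
  set V : FDRep ℂ H := FDRep.of (Representation.ofMulAction ℂ H H) with hV
  have hc := rho_comm_of_dim_le_one hyp _ V rfl a b (MonoidAlgebra.single (1 : H) (1 : ℂ))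
  have h1 : V.ρ a (V.ρ b (MonoidAlgebra.single 1 1)) = MonoidAlgebra.single (a * b) 1 := by
    show (Representation.ofMulAction ℂ H H) a ((Representation.ofMulAction ℂ H H) b
      (MonoidAlgebra.single 1 1)) = _
    rw [Representation.ofMulAction_single, Representation.ofMulAction_single]
    congr 1
    simp [smul_eq_mul]
  have h2 : V.ρ b (V.ρ a (MonoidAlgebra.single 1 1)) = MonoidAlgebra.single (b * a) 1 := by
    show (Representation.ofMulAction ℂ H H) b ((Representation.ofMulAction ℂ H H) a
      (MonoidAlgebra.single 1 1)) = _
    rw [Representation.ofMulAction_single, Representation.ofMulAction_single]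
    congr 1
    simp [smul_eq_mul]
  rw [h1, h2] at hc
  rcases (MonoidAlgebra.single_inj).mp hc with ⟨h, _⟩ | ⟨h, _⟩
  · exact h
  · exact absurd h one_ne_zero

theorem pullback_simple {G H : Type} [Group G] [Group H] (π : G →* H)
    (hs : Function.Surjective π) (U : FDRep ℂ H) [Simple U] :
    Simple (FDRep.of (U.ρ.comp π)) := by
  apply simple_of_irreducible
  · exact finrank_pos_of_simple U
  · intro p hp
    apply irreducible_of_simple U p
    intro q x hx
    obtain ⟨g, rfl⟩ := hs q
    exact hp g x hx

end
end VOAux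

/-- If `N` is a normal subgroup of a finite group `G` with `G/N` nonabelian, then
`N ≤ V(G)` and `V(G/N) ≤ V(G)/N`. -/
theorem vanishingOff_quotient (G : Type) [Group G] [Finite G] (N : Subgroup G) [N.Normal]
    (hna : ¬ ∀ x y : G ⧸ N, x * y = y * x) :
    N ≤ vanishingOff G ∧
      vanishingOff (G ⧸ N) ≤ (vanishingOff G).map (QuotientGroup.mk' N) := by
  have hfin : Finite (G ⧸ N) := Quotient.finite _
  cases nonempty_fintype (G ⧸ N)
  set π : G →* G ⧸ N := QuotientGroup.mk' N with hπ
  have hπs : Function.Surjective π := QuotientGroup.mk'_surjective N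
  obtain ⟨U, hU, hUd⟩ := VOAux.exists_nonlinear_simple (H := G ⧸ N) hna
  haveI := hU
  have lift_irr : ∀ (U' : FDRep ℂ (G ⧸ N)), Simple U' → 1 < Module.finrank ℂ U' →
      IsNonlinearIrrChar G (FDRep.of (U'.ρ.comp π)).character := by
    intro U' hU' hd'
    haveI := hU'
    exact ⟨FDRep.of (U'.ρ.comp π), VOAux.pullback_simple π hπs U', hd', rfl⟩
  constructor
  · intro n hn
    apply Subgroup.subset_closure
    refine ⟨(FDRep.of (U.ρ.comp π)).character, lift_irr U hU hUd, ?_⟩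
    have h1 : π n = 1 := (QuotientGroup.eq_one_iff n).mpr hn
    show U.character (π n) ≠ 0
    rw [h1, FDRep.char_one]
    exact Nat.cast_ne_zero.mpr (by omega)
  · rw [vanishingOff, Subgroup.closure_le]
    rintro h ⟨χ, ⟨U', hU', hd', rfl⟩, hχ⟩
    haveI := hU'
    obtain ⟨g, rfl⟩ := hπs h
    refine ⟨g, ?_, rfl⟩
    apply Subgroup.subset_closure
    exact ⟨(FDRep.of (U'.ρ.comp π)).character, lift_irr U' hU' hd', hχ⟩
end

section
/- Let G be a finite nonabelian group and let Z_i denote the terms of the upper central series of G. If G' is not contained in Z_m for some m ≥ 0, then Z_{m+1} ≤ V(G). In particular: if G is nilpotent of nilpotence class c, then Z_{c-1} ≤ V(G); and if G is not nilpotent, then the hypercenter Z_∞ of G is contained in V(G). -/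
open CategoryTheory

open Module

noncomputable section
namespace VOff
variable {G : Type} [Group G]

def subRep (V : FDRep ℂ G) (U : Submodule ℂ V) (hU : ∀ g : G, ∀ v ∈ U, V.ρ g v ∈ U) :
    FDRep ℂ G :=
  FDRep.of
    { toFun := fun g => (V.ρ g).restrict (hU g)
      map_one' := by ext v; simp [LinearMap.restrict_apply]
      map_mul' := fun g h => by ext v; simp [LinearMap.restrict_apply] }

def subRepι (V : FDRep ℂ G) (U : Submodule ℂ V) (hU : ∀ g : G, ∀ v ∈ U, V.ρ g v ∈ U) :
    subRep V U hU ⟶ V where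
  hom := ConcreteCategory.ofHom (C := FGModuleCat ℂ) U.subtype
  comm := fun g => by ext v; rfl

theorem id_eq_zero_absurd (V : FDRep ℂ G) (hnt : Nontrivial V) (h : 𝟙 V = 0) : False := by
  have h1 : ∀ v : V, v = 0 := by
    intro v
    have h2 := congrArg Action.Hom.hom h
    rw [Action.id_hom, Action.zero_hom] at h2
    calc v = (𝟙 V.V : V.V ⟶ V.V).hom.hom v := rfl
    _ = 0 := by rw [congrArg (fun φ : V.V ⟶ V.V => φ.hom.hom) h2]; rfl
  obtain ⟨x, y, hxy⟩ := hnt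
  exact hxy ((h1 x).trans (h1 y).symm)

theorem simple_of_irreducible (V : FDRep ℂ G) (hnt : Nontrivial V)
    (h : ∀ U : Submodule ℂ V, (∀ g : G, ∀ v ∈ U, V.ρ g v ∈ U) → U = ⊥ ∨ U = ⊤) :
    Simple V := by
  constructor
  intro Y f hm
  constructor
  · intro hiso h0
    have h2 : 𝟙 V = 0 := by
      have := congrArg (fun g => inv f ≫ g) h0
      simpa using this
    exact id_eq_zero_absurd V hnt h2
  · intro h0
    have hcomm : ∀ (g : G) (y : Y.V), f.hom.hom.hom (Y.ρ g y) = V.ρ g (f.hom.hom.hom y) := by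
      intro g y
      exact congrArg (fun (φ : Y.V ⟶ V.V) => φ.hom.hom y) (f.comm g)
    have hker : ∀ g : G, ∀ v ∈ LinearMap.ker f.hom.hom.hom, Y.ρ g v ∈ LinearMap.ker f.hom.hom.hom := by
      intro g v hv
      have hv' : f.hom.hom.hom v = 0 := hv
      have hout : f.hom.hom.hom (Y.ρ g v) = 0 := by rw [hcomm g v, hv', map_zero]
      exact hout
    have hinj : Function.Injective f.hom.hom.hom := by
      rw [← LinearMap.ker_eq_bot]
      by_contra hk
      obtain ⟨v, hv, hv0⟩ := Submodule.exists_mem_ne_zero_of_ne_bot hk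
      have hc : subRepι Y _ hker ≫ f = ((0 : subRep Y _ hker ⟶ Y) ≫ f) := by
        ext w
        show f.hom.hom.hom w.1 = _
        rw [w.2]
        show (0 : ↑V.V) = f.hom.hom.hom ((0 : subRep Y _ hker ⟶ Y).hom.hom.hom w)
        rw [Action.zero_hom]
        show (0 : ↑V.V) = f.hom.hom.hom 0
        rw [map_zero]
      have hc2 := (cancel_mono (f := f)).mp hc
      have h4 := congrArg (fun φ => φ.hom.hom.hom) hc2
      have h5 := DFunLike.congr_fun h4 (⟨v, hv⟩ : LinearMap.ker f.hom.hom.hom)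
      rw [Action.zero_hom] at h5
      have h6 : v = 0 := h5
      exact hv0 h6
    have hrange : ∀ g : G, ∀ v ∈ LinearMap.range f.hom.hom.hom, V.ρ g v ∈ LinearMap.range f.hom.hom.hom := by
      rintro g v ⟨y, rfl⟩
      exact ⟨Y.ρ g y, hcomm g y⟩
    have hsurj : Function.Surjective f.hom.hom.hom := by
      rw [← LinearMap.range_eq_top]
      rcases h _ hrange with hb | ht
      · exfalso
        apply h0
        ext y
        show f.hom.hom.hom y = _
        have hmem : f.hom.hom.hom y ∈ LinearMap.range f.hom.hom.hom := ⟨y, rfl⟩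
        rw [hb] at hmem
        rw [Submodule.mem_bot] at hmem
        rw [hmem, Action.zero_hom]
        rfl
      · exact ht
    let e : Y.V ≃ₗ[ℂ] V.V := LinearEquiv.ofBijective f.hom.hom.hom ⟨hinj, hsurj⟩
    refine ⟨⟨⟨ConcreteCategory.ofHom (C := FGModuleCat ℂ) (e.symm : V.V →ₗ[ℂ] Y.V), fun g => ?_⟩, ?_, ?_⟩⟩
    · ext v
      show e.symm ((V.ρ g) v) = (Y.ρ g) (e.symm v)
      apply hinj
      show f.hom.hom.hom (e.symm ((V.ρ g) v)) = f.hom.hom.hom ((Y.ρ g) (e.symm v))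
      rw [hcomm g (e.symm v)]
      have h6 : ∀ w, f.hom.hom.hom (e.symm w) = w := fun w => e.apply_symm_apply w
      rw [h6, h6]
    · ext y
      show e.symm (f.hom.hom.hom y) = y
      exact e.symm_apply_apply y
    · ext v
      show f.hom.hom.hom (e.symm v) = v
      exact e.apply_symm_apply v

theorem nontrivial_of_simple (V : FDRep ℂ G) [Simple V] : Nontrivial V := by
  by_contra h
  rw [not_nontrivial_iff_subsingleton] at h
  refine id_nonzero V ?_
  ext v
  exact h.elim v _

theorem irreducible_of_simple (V : FDRep ℂ G) [Simple V]
    (U : Submodule ℂ V) (hU : ∀ g : G, ∀ v ∈ U, V.ρ g v ∈ U) : U = ⊥ ∨ U = ⊤ := by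
  by_cases hb : U = ⊥
  · exact Or.inl hb
  right
  have hmono : Mono (subRepι V U hU) := by
    constructor
    intro Z gZ hZ hgh
    ext z
    show gZ.hom.hom.hom z = hZ.hom.hom.hom z
    have h4 := congrArg (fun φ => φ.hom.hom.hom) hgh
    rw [Action.comp_hom, Action.comp_hom] at h4
    have h5 := DFunLike.congr_fun h4 z
    have h6 : U.subtype (gZ.hom.hom.hom z) = U.subtype (hZ.hom.hom.hom z) := h5
    exact Subtype.ext h6
  have hne : subRepι V U hU ≠ 0 := by
    obtain ⟨v, hv, hv0⟩ := Submodule.exists_mem_ne_zero_of_ne_bot hb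
    intro h0
    have h4 := congrArg (fun φ => φ.hom.hom.hom) h0
    rw [Action.zero_hom] at h4
    have h5 := DFunLike.congr_fun h4 (⟨v, hv⟩ : U)
    exact hv0 h5
  have hiso : IsIso (subRepι V U hU) := (Simple.mono_isIso_iff_nonzero _).mpr hne
  rw [eq_top_iff]
  intro v _
  have h7 := congrArg (fun φ => φ.hom.hom.hom) (IsIso.inv_hom_id (subRepι V U hU))
  rw [Action.comp_hom, Action.id_hom] at h7
  have h8 := DFunLike.congr_fun h7 v
  have h9 : U.subtype ((inv (subRepι V U hU)).hom.hom.hom v) = v := h8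
  rw [← h9]
  exact ((inv (subRepι V U hU)).hom.hom.hom v).2

end VOff

namespace VOff
variable {G : Type} [Group G]

theorem central_char_ne_zero (V : FDRep ℂ G) [Simple V] {z : G}
    (hz : z ∈ Subgroup.center G) : V.character z ≠ 0 := by
  have hnt : Nontrivial V := nontrivial_of_simple V
  -- the endomorphism given by ρ z
  have hcommz : ∀ g : G, V.ρ z ∘ₗ V.ρ g = V.ρ g ∘ₗ V.ρ z := by
    intro g
    rw [← Module.End.mul_eq_comp, ← Module.End.mul_eq_comp, ← map_mul, ← map_mul,
      (Subgroup.mem_center_iff.mp hz g)]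
  let f : V ⟶ V := ⟨ConcreteCategory.ofHom (C := FGModuleCat ℂ) (V.ρ z : V →ₗ[ℂ] V),
    fun g => by ext v; exact LinearMap.congr_fun (hcommz g) v⟩
  have hfin : finrank ℂ (V ⟶ V) = 1 := by
    rw [FDRep.finrank_hom_simple_simple V V, if_pos ⟨Iso.refl V⟩]
  have hid : (𝟙 V : V ⟶ V) ≠ 0 := id_nonzero V
  obtain ⟨c, hc⟩ : ∃ c : ℂ, f = c • 𝟙 V := by
    have hspan := (finrank_eq_one_iff_of_nonzero' (𝟙 V) hid).mp hfin f
    obtain ⟨c, hc⟩ := hspan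
    exact ⟨c, hc.symm⟩
  have hρz : V.ρ z = c • LinearMap.id := by
    have h1 := congrArg (fun φ => φ.hom.hom.hom) hc
    exact h1
  have hcne : c ≠ 0 := by
    intro h0
    rw [h0, zero_smul] at hρz
    have : (V.ρ (z⁻¹ * z)) = 0 := by
      rw [map_mul, hρz]; simp
    rw [inv_mul_cancel, map_one] at this
    obtain ⟨x, y, hxy⟩ := hnt
    apply hxy
    have hall : ∀ v : V, v = 0 := by
      intro v
      calc v = (1 : Module.End ℂ V) v := rfl
      _ = (0 : Module.End ℂ V) v := by rw [this]
      _ = 0 := rfl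
    rw [hall x, hall y]
  show LinearMap.trace ℂ V (V.ρ z) ≠ 0
  rw [hρz, map_smul, LinearMap.trace_id]
  have hd : 0 < finrank ℂ V := finrank_pos
  simp only [smul_eq_mul]
  exact mul_ne_zero hcne (by exact_mod_cast hd.ne')

end VOff

namespace VOff
open MonoidAlgebra

variable (G : Type) [Group G] [Fintype G]

instance : FiniteDimensional ℂ (MonoidAlgebra ℂ G) :=
  Module.Finite.equiv ((Finsupp.linearEquivFunOnFinite ℂ ℂ G).symm.trans
    (MonoidAlgebra.coeffLinearEquiv ℂ).symm)

theorem exists_noncomm_simple_submodule (a b : G) (hab : a * b ≠ b * a) :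
    ∃ S : Submodule (MonoidAlgebra ℂ G) (MonoidAlgebra ℂ G), IsSimpleModule (MonoidAlgebra ℂ G) S ∧
      ∃ s ∈ S, of ℂ G (a * b) * s ≠ of ℂ G (b * a) * s := by
  haveI : NeZero ((Fintype.card G : ℂ)) := ⟨Nat.cast_ne_zero.mpr Fintype.card_ne_zero⟩
  by_contra hcon
  push_neg at hcon
  -- every element of every simple submodule is "commuting"; conclude of(ab) = of(ba)
  have htop : (⊤ : Submodule (MonoidAlgebra ℂ G) (MonoidAlgebra ℂ G)) =
      sSup {m : Submodule (MonoidAlgebra ℂ G) (MonoidAlgebra ℂ G) |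
        IsSimpleModule (MonoidAlgebra ℂ G) m} :=
    (IsSemisimpleModule.sSup_simples_eq_top _ _).symm
  have hmem : (1 : MonoidAlgebra ℂ G) ∈
      sSup {m : Submodule (MonoidAlgebra ℂ G) (MonoidAlgebra ℂ G) |
        IsSimpleModule (MonoidAlgebra ℂ G) m} := by
    rw [← htop]; trivial
  rw [sSup_eq_iSup'] at hmem
  have hC : ∀ r : MonoidAlgebra ℂ G,
      of ℂ G (a * b) * (r * 1) = of ℂ G (b * a) * (r * 1) := by
    refine Submodule.iSup_induction _ (motive := fun v => ∀ r : MonoidAlgebra ℂ G,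
      of ℂ G (a * b) * (r * v) = of ℂ G (b * a) * (r * v)) hmem ?_ ?_ ?_
    · rintro ⟨S, hS⟩ x hx r
      have hrx : r * x ∈ S := S.smul_mem r hx
      exact hcon S hS (r * x) hrx
    · intro r; simp
    · intro x y hx hy r
      rw [mul_add, mul_add, mul_add, hx r, hy r]
  have h1 := hC 1
  simp only [one_mul, mul_one] at h1
  exact hab (MonoidAlgebra.of_injective h1)

theorem exists_nonlinear (a b : G) (hab : a * b ≠ b * a) :
    ∃ V : FDRep ℂ G, Simple V ∧ 1 < finrank ℂ V := by
  obtain ⟨S, hS, s, hsS, hs⟩ := exists_noncomm_simple_submodule G a b hab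
  -- the ℂ-submodule underlying S
  let U : Submodule ℂ (MonoidAlgebra ℂ G) := S.restrictScalars ℂ
  have hUmem : ∀ x, x ∈ U ↔ x ∈ S := fun _ => Iff.rfl
  have hUinv : ∀ g : G, ∀ x ∈ U, of ℂ G g * x ∈ U := by
    intro g x hx
    show of ℂ G g * x ∈ S
    exact S.smul_mem _ hx
  -- representation of G on U
  let ρ : Representation ℂ G U :=
    { toFun := fun g => (LinearMap.mulLeft ℂ (of ℂ G g)).restrict (hUinv g)
      map_one' := by
        ext x
        simp [LinearMap.restrict_apply]
      map_mul' := fun g h => by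
        ext x
        simp [LinearMap.restrict_apply, mul_assoc] }
  have hρ_apply : ∀ (g : G) (x : U), ((ρ g x : U) : MonoidAlgebra ℂ G) = of ℂ G g * x :=
    fun g x => rfl
  -- nontrivial
  have hSbot : S ≠ ⊥ := (isSimpleModule_iff_isAtom.mp hS).1 -- IsAtom: S ≠ ⊥
  obtain ⟨x0, hx0S, hx00⟩ := Submodule.exists_mem_ne_zero_of_ne_bot hSbot
  haveI hnt : Nontrivial U := ⟨⟨x0, hx0S⟩, 0, by simp [Subtype.ext_iff, hx00]⟩
  -- irreducibility
  have hirr : ∀ W : Submodule ℂ U, (∀ g : G, ∀ v ∈ W, ρ g v ∈ W) → W = ⊥ ∨ W = ⊤ := by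
    intro W hW
    -- promote to an A-submodule of A
    let D : Submodule ℂ (MonoidAlgebra ℂ G) := W.map U.subtype
    have hD : ∀ (r : MonoidAlgebra ℂ G), ∀ x ∈ D, r * x ∈ D := by
      intro r x hx
      induction r using MonoidAlgebra.induction_on with
      | of g =>
        obtain ⟨w, hw, rfl⟩ := hx
        exact ⟨ρ g w, hW g w hw, rfl⟩
      | add f g hf hg => rw [add_mul]; exact D.add_mem hf hg
      | smul c f hf => rw [smul_mul_assoc]; exact D.smul_mem c hf
    let D' : Submodule (MonoidAlgebra ℂ G) (MonoidAlgebra ℂ G) :=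
      { carrier := D
        add_mem' := fun h1 h2 => D.add_mem h1 h2
        zero_mem' := D.zero_mem
        smul_mem' := fun r x hx => hD r x hx }
    have hD'le : D' ≤ S := by
      rintro x ⟨w, hw, rfl⟩
      exact (w : U).2
    by_cases hbot : D' = S
    · right
      rw [eq_top_iff]
      intro u _
      have humem : (u : MonoidAlgebra ℂ G) ∈ D' := by rw [hbot]; exact u.2
      obtain ⟨w, hw, hwu⟩ := humem
      have : w = u := Subtype.ext hwu
      rwa [← this]
    · left
      have hDbot : D' = ⊥ := (isSimpleModule_iff_isAtom.mp hS).2 D' (lt_of_le_of_ne hD'le hbot)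
      rw [eq_bot_iff]
      intro w hw
      have : (w : MonoidAlgebra ℂ G) ∈ D' := ⟨w, hw, rfl⟩
      rw [hDbot] at this
      have hw0 : (w : MonoidAlgebra ℂ G) = 0 := this
      exact (Submodule.mem_bot ℂ).mpr (Subtype.ext hw0)
  -- build the FDRep
  refine ⟨FDRep.of ρ, ?_, ?_⟩
  · refine simple_of_irreducible (FDRep.of ρ) hnt ?_
    intro W hW
    exact hirr W hW
  · -- dimension > 1
    have hne : ρ (a * b) ≠ ρ (b * a) := by
      intro h
      apply hs
      have h3 := congrArg (fun φ => ((φ (⟨s, hsS⟩ : U) : U) : MonoidAlgebra ℂ G)) h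
      exact h3
    have h1le : 0 < finrank ℂ U := finrank_pos
    show 1 < finrank ℂ U
    rcases lt_or_ge 1 (finrank ℂ U) with h | h
    · exact h
    · exfalso
      have hone : finrank ℂ U = 1 := le_antisymm h h1le
      obtain ⟨v, hv0⟩ := exists_ne (0 : U)
      have hsp := (finrank_eq_one_iff_of_nonzero' v hv0).mp hone
      obtain ⟨α, hα⟩ := hsp (ρ a v)
      obtain ⟨β, hβ⟩ := hsp (ρ b v)
      apply hne
      refine LinearMap.ext fun w => ?_
      obtain ⟨c, rfl⟩ := hsp w
      have e1 : ρ (a * b) (c • v) = ρ a (ρ b (c • v)) := by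
        rw [map_mul]; rfl
      have e2 : ρ (b * a) (c • v) = ρ b (ρ a (c • v)) := by
        rw [map_mul]; rfl
      have L : ρ a (ρ b (c • v)) = (c * β * α) • v := by
        rw [map_smul, ← hβ, map_smul, map_smul, ← hα, smul_smul, smul_smul]
      have R : ρ b (ρ a (c • v)) = (c * α * β) • v := by
        rw [map_smul, ← hα, map_smul, map_smul, ← hβ, smul_smul, smul_smul]
      rw [e1, e2, L, R, show c * α * β = c * β * α by ring]

end VOff

noncomputable section
namespace VOff

section Pull
variable {G H : Type} [Group G] [Group H] (π : G →* H)

def pullRep (W : FDRep ℂ H) : FDRep ℂ G :=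
  FDRep.of ((W.ρ : Representation ℂ H W).comp π)

theorem pullRep_character (W : FDRep ℂ H) (g : G) :
    (pullRep π W).character g = W.character (π g) := rfl

theorem pullRep_finrank (W : FDRep ℂ H) :
    Module.finrank ℂ (pullRep π W) = Module.finrank ℂ W := rfl

theorem pullRep_simple (hπ : Function.Surjective π) (W : FDRep ℂ H) [Simple W] :
    Simple (pullRep π W) := by
  haveI hnt := nontrivial_of_simple W
  refine simple_of_irreducible _ hnt ?_
  intro U hU
  refine irreducible_of_simple W U ?_
  intro h v hv
  obtain ⟨g, rfl⟩ := hπ h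
  exact hU g v hv

end Pull

section Cent
variable (G : Type) [Group G]

theorem center_le_vanishingOff [Finite G] (a b : G) (hab : a * b ≠ b * a) :
    Subgroup.center G ≤ vanishingOff G := by
  haveI := Fintype.ofFinite G
  intro z hz
  apply Subgroup.subset_closure
  obtain ⟨V, hS, hd⟩ := exists_nonlinear G a b hab
  haveI := hS
  exact ⟨V.character, ⟨V, hS, hd, rfl⟩, central_char_ne_zero V hz⟩

open commutatorElement in
/-- if all elements commute then the commutator is trivial -/
theorem commutator_eq_bot_of_comm (hc : ∀ a b : G, a * b = b * a) : commutator G = ⊥ := by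
  rw [commutator, eq_bot_iff]
  apply Subgroup.commutator_le.mpr
  intro g₁ _ g₂ _
  have h1 : ⁅g₁, g₂⁆ = 1 := by
    rw [commutatorElement_def, hc g₁ g₂]
    group
  rw [h1]
  exact Subgroup.one_mem ⊥

theorem exists_noncomm (h : ¬ commutator G ≤ ⊥) : ∃ a b : G, a * b ≠ b * a := by
  by_contra hc
  push_neg at hc
  exact h (le_of_eq (commutator_eq_bot_of_comm G fun a b => (hc a b)))

end Cent

theorem key_lemma : ∀ (m : ℕ) (G : Type) [Group G] [Finite G],
    ¬ commutator G ≤ upperCentralSeries G m →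
    upperCentralSeries G (m + 1) ≤ vanishingOff G := by
  intro m
  induction m with
  | zero =>
    intro G _ _ hc
    unfold upperCentralSeries at hc ⊢
    rw [upperCentralSeries_zero] at hc
    obtain ⟨a, b, hab⟩ := exists_noncomm G hc
    rw [upperCentralSeries_one]
    exact center_le_vanishingOff G a b hab
  | succ m ih =>
    intro G _ _ hc
    unfold upperCentralSeries at ih hc ⊢
    have hnab : ∃ a b : G, a * b ≠ b * a := by
      apply exists_noncomm
      intro hle
      exact hc (hle.trans bot_le)
    obtain ⟨a, b, hab⟩ := hnab
    set π := QuotientGroup.mk' (Subgroup.center G) with hπ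
    have hsurj : Function.Surjective π := QuotientGroup.mk'_surjective _
    -- commutator of the quotient
    have hcQ : commutator (G ⧸ Subgroup.center G) = Subgroup.map π (commutator G) := by
      rw [commutator, commutator, Subgroup.map_commutator,
        Subgroup.map_top_of_surjective π hsurj]
    have h2 : ¬ commutator (G ⧸ Subgroup.center G) ≤
        upperCentralSeries (G ⧸ Subgroup.center G) m := by
      intro hle
      apply hc
      have h3 : commutator G ≤ Subgroup.comap π (commutator (G ⧸ Subgroup.center G)) := by
        rw [hcQ]
        exact Subgroup.le_comap_map _ _
      refine h3.trans ?_
      rw [← comap_upperCentralSeries_quotient_center m]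
      exact Subgroup.comap_mono hle
    have hih := ih (G ⧸ Subgroup.center G) h2
    intro z hz
    have hzQ : π z ∈ upperCentralSeries (G ⧸ Subgroup.center G) (m + 1) := by
      rw [← comap_upperCentralSeries_quotient_center (m + 1)] at hz
      exact hz
    have hzV : π z ∈ vanishingOff (G ⧸ Subgroup.center G) := hih hzQ
    -- vanishingOff of quotient is contained in image of vanishingOff
    have hmap : vanishingOff (G ⧸ Subgroup.center G) ≤ Subgroup.map π (vanishingOff G) := by
      rw [vanishingOff, Subgroup.closure_le]
      rintro q ⟨χq, ⟨W, hWs, hWd, rfl⟩, hne⟩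
      obtain ⟨g, rfl⟩ := hsurj q
      refine ⟨g, ?_, rfl⟩
      apply Subgroup.subset_closure
      haveI := hWs
      haveI := pullRep_simple π hsurj W
      refine ⟨(pullRep π W).character, ⟨pullRep π W, inferInstance, ?_, rfl⟩, ?_⟩
      · rw [pullRep_finrank]; exact hWd
      · rw [pullRep_character]; exact hne
    have hz2 : z ∈ Subgroup.comap π (Subgroup.map π (vanishingOff G)) := hmap hzV
    rw [Subgroup.comap_map_eq] at hz2
    have hker : π.ker = Subgroup.center G := QuotientGroup.ker_mk' _
    rw [hker] at hz2
    have : vanishingOff G ⊔ Subgroup.center G = vanishingOff G :=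
      sup_of_le_left (center_le_vanishingOff G a b hab)
    rwa [this] at hz2

end VOff
end

namespace VOff

theorem ucs_succ_eq_top_of_commutator_le {G : Type} [Group G] {n : ℕ}
    (h : commutator G ≤ upperCentralSeries G n) : upperCentralSeries G (n + 1) = ⊤ := by
  unfold upperCentralSeries at h ⊢
  rw [eq_top_iff]
  intro x _
  rw [mem_upperCentralSeries_succ_iff]
  intro y
  exact h (Subgroup.commutator_mem_commutator (Subgroup.mem_top x) (Subgroup.mem_top y))

end VOff

/-- For a finite nonabelian group `G`: if `G'` is not contained in the `m`-th term `Z_m` of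
the upper central series, then `Z_{m+1} ≤ V(G)`.  In particular, if `G` is nilpotent of
class `c` then `Z_{c-1} ≤ V(G)`, and if `G` is not nilpotent then the hypercenter
`Z_∞ = ⨆ n, Z_n` is contained in `V(G)`. -/
theorem upperCentralSeries_le_vanishingOff (G : Type) [Group G] [Finite G]
    (hna : ¬ ∀ a b : G, a * b = b * a) :
    (∀ m : ℕ, ¬ commutator G ≤ upperCentralSeries G m →
        upperCentralSeries G (m + 1) ≤ vanishingOff G) ∧
      (∀ (h : Group.IsNilpotent G) (c : ℕ), Group.nilpotencyClass G = c →
        upperCentralSeries G (c - 1) ≤ vanishingOff G) ∧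
      (¬ Group.IsNilpotent G → (⨆ n : ℕ, upperCentralSeries G n) ≤ vanishingOff G) := by
  unfold upperCentralSeries
  refine ⟨fun m hm => VOff.key_lemma m G hm, ?_, ?_⟩
  · intro h c hcc
    haveI := h
    have htop : upperCentralSeries G c = ⊤ := by
      rw [← hcc]
      exact upperCentralSeries_nilpotencyClass
    have hc2 : 2 ≤ c := by
      by_contra hlt
      push_neg at hlt
      apply hna
      have h1 : upperCentralSeries G 1 = ⊤ :=
        eq_top_iff.mpr (le_trans (le_of_eq htop.symm) (upperCentralSeries_mono G (by omega)))
      intro a b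
      have hb : b ∈ Subgroup.center G := by
        rw [← upperCentralSeries_one]
        unfold upperCentralSeries at h1
        rw [h1]
        trivial
      exact Subgroup.mem_center_iff.mp hb a
    have hnc : ¬ commutator G ≤ upperCentralSeries G (c - 2) := by
      intro hle
      have h4 := upperCentralSeries_eq_top_iff_nilpotencyClass_le.mp
        (VOff.ucs_succ_eq_top_of_commutator_le hle)
      rw [hcc] at h4
      omega
    have h5 := VOff.key_lemma (c - 2) G hnc
    rwa [show c - 2 + 1 = c - 1 by omega] at h5
  · intro hnn
    apply iSup_le
    intro n
    cases n with
    | zero =>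
      rw [upperCentralSeries_zero]
      exact bot_le
    | succ n =>
      apply VOff.key_lemma n G
      intro hle
      exact hnn ⟨⟨n + 1, VOff.ucs_succ_eq_top_of_commutator_le hle⟩⟩
end
end

section
/- Let G be a finite nonabelian group. Then for all i ≥ 1, G_{i+1} ≤ V_i(G) ≤ G_i. Moreover, if V_n(G) < G_n for some n, then V_i(G) < G_i for all i with 1 ≤ i ≤ n, and in that case G/V_n(G) is nilpotent of nilpotence class exactly n. -/
open CategoryTheory

namespace VOaux

open MonoidAlgebra

section Reps

variable (G : Type) [Group G] [Fintype G] [DecidableEq G]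
local notation "A" => MonoidAlgebra ℂ G

noncomputable instance : Module.Finite ℂ (MonoidAlgebra ℂ G) :=
  Module.Finite.of_basis (MonoidAlgebra.basis G ℂ)

noncomputable def abasis : Module.Basis G ℂ (MonoidAlgebra ℂ G) := MonoidAlgebra.basis G ℂ

set_option linter.unusedSectionVars false

lemma abasis_apply (g : G) : abasis G g = single g 1 := by
  rfl

lemma abasis_repr (v : A) (g : G) : (abasis G).repr v g = v.coeff g := by
  rfl

noncomputable def lsm (x : G) : A →ₗ[ℂ] A := LinearMap.mulLeft ℂ (single x 1)

lemma lsm_apply (x : G) (v : A) : lsm G x v = single x 1 * v := rfl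

lemma trace_lsm (x : G) (hx : x ≠ 1) : LinearMap.trace ℂ A (lsm G x) = 0 := by
  classical
  rw [LinearMap.trace_eq_matrix_trace ℂ (abasis G)]
  rw [Matrix.trace]
  refine Finset.sum_eq_zero fun g _ => ?_
  rw [Matrix.diag_apply, LinearMap.toMatrix_apply, abasis_apply]
  have h2 : lsm G x (single g 1) = single (x * g) 1 := by
    rw [lsm_apply]
    exact (MonoidAlgebra.single_mul_single ..).trans (by rw [one_mul])
  rw [h2, abasis_repr]
  have hxg : x * g ≠ g := fun h => hx (by
    have : x * g = 1 * g := by rw [h, one_mul]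
    exact mul_right_cancel this)
  simp [MonoidAlgebra.coeff_single, Finsupp.single_apply, hxg]

variable {G} in
lemma lsm_mapsTo (x : G) (p : Submodule (MonoidAlgebra ℂ G) (MonoidAlgebra ℂ G)) :
    Set.MapsTo (lsm G x) (p.restrictScalars ℂ) (p.restrictScalars ℂ) := by
  intro v hv
  have : single x (1:ℂ) * v ∈ p := by
    rw [← smul_eq_mul]
    exact p.smul_mem _ hv
  exact this

noncomputable def rhoP (p : Submodule (MonoidAlgebra ℂ G) (MonoidAlgebra ℂ G)) :
    Representation ℂ G (p.restrictScalars ℂ) where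
  toFun x := (lsm G x).restrict (lsm_mapsTo x p)
  map_one' := LinearMap.ext fun v => Subtype.ext (by
    show single (1 : G) (1:ℂ) * (v : A) = (v : A)
    rw [← MonoidAlgebra.one_def, one_mul])
  map_mul' x y := LinearMap.ext fun v => Subtype.ext (by
    show single (x * y) (1:ℂ) * (v : A) = single x (1:ℂ) * (single y (1:ℂ) * (v : A))
    rw [← mul_assoc, MonoidAlgebra.single_mul_single, one_mul])

noncomputable def Xp (p : Submodule (MonoidAlgebra ℂ G) (MonoidAlgebra ℂ G)) : FDRep ℂ G :=
  FDRep.of (rhoP G p)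

lemma Xp_character (p : Submodule (MonoidAlgebra ℂ G) (MonoidAlgebra ℂ G)) (x : G) :
    (Xp G p).character x
      = LinearMap.trace ℂ (p.restrictScalars ℂ) ((lsm G x).restrict (lsm_mapsTo x p)) := rfl

lemma simple_Xp (p : Submodule (MonoidAlgebra ℂ G) (MonoidAlgebra ℂ G))
    (hs : IsSimpleModule (MonoidAlgebra ℂ G) p) :
    Simple (Xp G p) := by
  haveI hP : IsSimpleModule (MonoidAlgebra ℂ G) (p.restrictScalars ℂ) := hs
  haveI hnt : Nontrivial (p.restrictScalars ℂ) := IsSimpleModule.nontrivial (MonoidAlgebra ℂ G) _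
  constructor
  intro Y f hmono
  constructor
  · intro hiso hf0
    obtain ⟨w, hw⟩ := exists_ne (0 : p.restrictScalars ℂ)
    apply hw
    have h1 : 𝟙 (Xp G p) = (0 : Xp G p ⟶ Xp G p) := by
      calc 𝟙 (Xp G p) = inv f ≫ f := (IsIso.inv_hom_id f).symm
        _ = inv f ≫ 0 := by rw [← hf0]
        _ = 0 := Limits.comp_zero
    have h2 := congrArg (fun q : Xp G p ⟶ Xp G p => q.hom.hom.hom w) h1
    exact h2
  · intro hf0
    have hinj : Function.Injective f.hom := by
      have hker : LinearMap.ker (f.hom.hom.hom : Y →ₗ[ℂ] Xp G p) = ⊥ := by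
        by_contra hK
        set K : Submodule ℂ Y := LinearMap.ker f.hom.hom.hom with hKdef
        have hmapsTo : ∀ g : G, Set.MapsTo (Y.ρ g) K K := by
          intro g y hy
          have hy' : f.hom y = 0 := hy
          have : f.hom (Y.ρ g y) = (Xp G p).ρ g (f.hom y) := by
            exact ConcreteCategory.congr_hom (f.comm g) y
          show f.hom (Y.ρ g y) = 0
          rw [this, hy', map_zero]
        let ρK : Representation ℂ G K :=
          { toFun := fun g => (Y.ρ g).restrict (hmapsTo g)
            map_one' := LinearMap.ext fun v => Subtype.ext (by
              show Y.ρ 1 (v : Y) = (v : Y)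
              rw [map_one]; rfl)
            map_mul' := fun g h => LinearMap.ext fun v => Subtype.ext (by
              show Y.ρ (g * h) (v : Y) = Y.ρ g (Y.ρ h (v : Y))
              rw [map_mul]; rfl) }
        let Z : FDRep ℂ G := FDRep.of ρK
        let ι : Z ⟶ Y := Action.Hom.mk (FGModuleCat.ofHom (K.subtype : K →ₗ[ℂ] Y))
            (fun g => FGModuleCat.hom_ext (LinearMap.ext fun _ => rfl))
        have hcomp : ι ≫ f = 0 := by
          ext v
          exact v.2
        have hι : ι = 0 := (cancel_mono f).mp (hcomp.trans Limits.zero_comp.symm)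
        apply hK
        rw [eq_bot_iff]
        intro y hy
        have : (ι.hom.hom.hom) ⟨y, hy⟩ = (0 : Z ⟶ Y).hom.hom.hom ⟨y, hy⟩ := by rw [hι]
        rw [Submodule.mem_bot]
        exact this
      exact LinearMap.ker_eq_bot.mp hker
    have hequiv : ∀ (g : G) (y : Y), f.hom (Y.ρ g y) = (Xp G p).ρ g (f.hom y) := by
      intro g y
      exact ConcreteCategory.congr_hom (f.comm g) y
    have hsurj : Function.Surjective f.hom := by
      set R : Submodule ℂ (p.restrictScalars ℂ) :=
        LinearMap.range (f.hom.hom.hom : Y →ₗ[ℂ] (p.restrictScalars ℂ)) with hR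
      have hstable : ∀ (g : G) (v : p.restrictScalars ℂ), v ∈ R → single g (1:ℂ) • v ∈ R := by
        rintro g v ⟨y, rfl⟩
        exact ⟨Y.ρ g y, hequiv g y⟩
      let q : Submodule (MonoidAlgebra ℂ G) (p.restrictScalars ℂ) :=
        { carrier := R
          add_mem' := fun ha hb => R.add_mem ha hb
          zero_mem' := R.zero_mem
          smul_mem' := by
            intro a v hv
            induction a using MonoidAlgebra.induction_on with
            | of g => exact hstable g v hv
            | add a b ha hb => rw [add_smul]; exact R.add_mem ha hb
            | smul c a ha => rw [smul_assoc]; exact R.smul_mem c ha }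
      rcases eq_bot_or_eq_top q with hq | hq
      · exfalso
        apply hf0
        ext y
        show f.hom y = 0
        have : f.hom y ∈ q := ⟨y, rfl⟩
        rw [hq] at this
        exact this
      · intro v
        have : v ∈ q := by rw [hq]; trivial
        exact this
    let fl : Y →ₗ[ℂ] (Xp G p) := f.hom.hom.hom
    have hbij : Function.Bijective fl := ⟨hinj, hsurj⟩
    let e := LinearEquiv.ofBijective fl hbij
    have hcomm : ∀ (g : G) (v : Xp G p), e.symm ((Xp G p).ρ g v) = Y.ρ g (e.symm v) := by
      intro g v
      apply hinj
      show fl _ = fl _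
      have h1 : fl (e.symm ((Xp G p).ρ g v)) = (Xp G p).ρ g v := e.apply_symm_apply _
      have h2 : fl (Y.ρ g (e.symm v)) = (Xp G p).ρ g (fl (e.symm v)) := hequiv g _
      rw [h1, h2]
      congr 1
      exact (e.apply_symm_apply v).symm
    let ginv : Xp G p ⟶ Y := Action.Hom.mk (FGModuleCat.ofHom (e.symm.toLinearMap : (Xp G p) →ₗ[ℂ] Y))
      (fun g => FGModuleCat.hom_ext (LinearMap.ext fun v => hcomm g v))
    refine ⟨⟨ginv, ?_, ?_⟩⟩
    · ext y
      show ginv.hom (f.hom y) = y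
      exact e.symm_apply_apply y
    · ext v
      show f.hom (ginv.hom v) = v
      exact e.apply_symm_apply v

end Reps

lemma trace_comp_of_finrank_one {M : Type*} [AddCommGroup M] [Module ℂ M]
    (h : Module.finrank ℂ M = 1) (f g : M →ₗ[ℂ] M) :
    LinearMap.trace ℂ M (f ∘ₗ g) = LinearMap.trace ℂ M f * LinearMap.trace ℂ M g := by
  have : FiniteDimensional ℂ M := Module.finite_of_finrank_eq_succ h
  let b : Module.Basis (Fin 1) ℂ M := Module.finBasisOfFinrankEq ℂ M h
  rw [LinearMap.trace_eq_matrix_trace ℂ b, LinearMap.trace_eq_matrix_trace ℂ b,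
    LinearMap.trace_eq_matrix_trace ℂ b, LinearMap.toMatrix_comp b b b]
  simp [Matrix.trace, Matrix.mul_apply]

lemma trace_id_of_finrank_one {M : Type*} [AddCommGroup M] [Module ℂ M]
    (h : Module.finrank ℂ M = 1) :
    LinearMap.trace ℂ M (LinearMap.id) = 1 := by
  have : FiniteDimensional ℂ M := Module.finite_of_finrank_eq_succ h
  rw [LinearMap.trace_id, h]
  norm_num

lemma trace_rho_of_mem_commutator {G : Type} [Group G] {M : Type*} [AddCommGroup M] [Module ℂ M]
    (ρ : Representation ℂ G M) (h : Module.finrank ℂ M = 1) {x : G} (hx : x ∈ commutator G) :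
    LinearMap.trace ℂ M (ρ x) = 1 := by
  let χ : G →* ℂ :=
    { toFun := fun g => LinearMap.trace ℂ M (ρ g)
      map_one' := by
        show LinearMap.trace ℂ M (ρ 1) = 1
        rw [map_one]; exact trace_id_of_finrank_one h
      map_mul' := fun g₁ g₂ => by
        show LinearMap.trace ℂ M (ρ (g₁ * g₂)) = _
        rw [map_mul]
        exact trace_comp_of_finrank_one h (ρ g₁) (ρ g₂) }
  have := Abelianization.commutator_subset_ker χ.toHomUnits hx
  have h1 : χ.toHomUnits x = 1 := this
  calc LinearMap.trace ℂ M (ρ x) = χ x := rfl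
    _ = ((χ.toHomUnits x : ℂˣ) : ℂ) := (MonoidHom.coe_toHomUnits χ x).symm
    _ = 1 := by rw [h1]; rfl

end VOaux

lemma commutator_le_vanishingOff (G : Type) [Group G] [Finite G] :
    commutator G ≤ vanishingOff G := by
  classical
  have _ : Fintype G := Fintype.ofFinite G
  intro x hx
  by_contra hxV
  have hx1 : x ≠ 1 := fun h => hxV (h ▸ (vanishingOff G).one_mem)
  have hvanish : ∀ χ : G → ℂ, IsNonlinearIrrChar G χ → χ x = 0 := by
    intro χ hχ
    by_contra h0
    exact hxV (Subgroup.subset_closure ⟨χ, hχ, h0⟩)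
  haveI : IsNoetherian ℂ (MonoidAlgebra ℂ G) := inferInstance
  haveI : IsNoetherian (MonoidAlgebra ℂ G) (MonoidAlgebra ℂ G) := isNoetherian_of_tower ℂ this
  obtain ⟨s, hindep, hsup, hsimple⟩ :=
    IsSemisimpleModule.exists_sSupIndep_sSup_simples_eq_top (MonoidAlgebra ℂ G) (MonoidAlgebra ℂ G)
  have hfin : s.Finite := WellFoundedGT.finite_of_sSupIndep hindep
  haveI := hfin.fintype
  haveI : DecidableEq ↑s := Classical.decEq _
  have hiA : iSupIndep (fun i : s => (i : Submodule (MonoidAlgebra ℂ G) (MonoidAlgebra ℂ G))) :=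
    (sSupIndep_iff s).mp hindep
  have hsupA : (⨆ i : s, (i : Submodule (MonoidAlgebra ℂ G) (MonoidAlgebra ℂ G))) = ⊤ := by
    rw [← sSup_eq_iSup', hsup]
  have hIA : DirectSum.IsInternal
      (fun i : s => (i : Submodule (MonoidAlgebra ℂ G) (MonoidAlgebra ℂ G))) :=
    DirectSum.isInternal_submodule_of_iSupIndep_of_iSup_eq_top hiA hsupA
  set L := Submodule.restrictScalarsLatticeHom ℂ (MonoidAlgebra ℂ G) (MonoidAlgebra ℂ G) with hL
  have hiC : iSupIndep (fun i : s =>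
      ((i : Submodule (MonoidAlgebra ℂ G) (MonoidAlgebra ℂ G)).restrictScalars ℂ)) := by
    intro i
    have h1 := hiA i
    rw [disjoint_iff] at h1 ⊢
    have h2 := congrArg L h1
    rw [map_inf, map_bot] at h2
    have h3 : L (⨆ j, ⨆ (_ : j ≠ i), (j : Submodule (MonoidAlgebra ℂ G) (MonoidAlgebra ℂ G)))
        = ⨆ j, ⨆ (_ : j ≠ i), ((j : Submodule (MonoidAlgebra ℂ G) (MonoidAlgebra ℂ G)).restrictScalars ℂ) := by
      rw [map_iSup]
      congr 1
      funext j
      rw [map_iSup]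
      rfl
    rw [h3] at h2
    exact h2
  have hsupC : (⨆ i : s,
      ((i : Submodule (MonoidAlgebra ℂ G) (MonoidAlgebra ℂ G)).restrictScalars ℂ)) = ⊤ := by
    have := congrArg L hsupA
    rw [map_iSup, map_top] at this
    exact this
  have hIC : DirectSum.IsInternal (fun i : s =>
      ((i : Submodule (MonoidAlgebra ℂ G) (MonoidAlgebra ℂ G)).restrictScalars ℂ)) :=
    DirectSum.isInternal_submodule_of_iSupIndep_of_iSup_eq_top hiC hsupC
  -- the trace of left multiplication by x
  have htr :=
    LinearMap.trace_eq_sum_trace_restrict hIC (fun i => VOaux.lsm_mapsTo x (i : _))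
  rw [VOaux.trace_lsm G x hx1] at htr
  set t : s → ℂ := fun i => LinearMap.trace ℂ _
    ((VOaux.lsm G x).restrict (VOaux.lsm_mapsTo x (i : _))) with ht
  -- each component is simple
  have hsimp : ∀ i : s, IsSimpleModule (MonoidAlgebra ℂ G)
      (i : Submodule (MonoidAlgebra ℂ G) (MonoidAlgebra ℂ G)) := fun i => hsimple i i.2
  -- values of t
  have hvals : ∀ i : s, t i = 1 ∨ t i = 0 := by
    intro i
    haveI := hsimp i
    haveI : IsSimpleModule (MonoidAlgebra ℂ G)
        ((i : Submodule (MonoidAlgebra ℂ G) (MonoidAlgebra ℂ G)).restrictScalars ℂ) := hsimp i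
    haveI : Nontrivial ((i : Submodule (MonoidAlgebra ℂ G) (MonoidAlgebra ℂ G)).restrictScalars ℂ) :=
      IsSimpleModule.nontrivial (MonoidAlgebra ℂ G) _
    have hpos : 0 < Module.finrank ℂ
        ((i : Submodule (MonoidAlgebra ℂ G) (MonoidAlgebra ℂ G)).restrictScalars ℂ) :=
      Module.finrank_pos
    rcases eq_or_lt_of_le (Nat.one_le_iff_ne_zero.mpr hpos.ne') with h1 | h1
    · left
      rw [ht]
      exact VOaux.trace_rho_of_mem_commutator (VOaux.rhoP G (i : _)) h1.symm hx
    · right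
      have hchar := hvanish ((VOaux.Xp G (i:_)).character)
        ⟨VOaux.Xp G (i:_), VOaux.simple_Xp G (i:_) (hsimp i), h1, rfl⟩
      rw [VOaux.Xp_character] at hchar
      exact hchar
  -- fixed vector: there is a 1-dimensional component
  letI dec := hIA.chooseDecomposition
  set e : MonoidAlgebra ℂ G := ∑ g : G, MonoidAlgebra.single g 1 with he
  have he_fix : ∀ h : G, MonoidAlgebra.single h (1:ℂ) * e = e := by
    intro h
    rw [he, Finset.mul_sum]
    refine Fintype.sum_equiv (Equiv.mulLeft h) _ _ fun g => ?_
    rw [MonoidAlgebra.single_mul_single, one_mul]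
    rfl
  have he_ne : e ≠ 0 := by
    intro h0
    have h1 : e.coeff 1 = (1:ℂ) := by
      rw [he, MonoidAlgebra.coeff_sum, Finsupp.finset_sum_apply]
      simp [MonoidAlgebra.coeff_single, Finsupp.single_apply]
    rw [h0] at h1
    simp at h1
  set D := DirectSum.decompose (fun i : s => (i : Submodule (MonoidAlgebra ℂ G) (MonoidAlgebra ℂ G)))
    with hD
  have hDe : ∃ i₀ : s, D e i₀ ≠ 0 := by
    by_contra hall
    push_neg at hall
    apply he_ne
    have : D e = 0 := DFinsupp.ext hall
    have h2 := congrArg (D.symm) this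
    rw [Equiv.symm_apply_apply] at h2
    rw [h2]
    exact map_zero (DirectSum.decomposeLinearEquiv
      (fun i : s => (i : Submodule (MonoidAlgebra ℂ G) (MonoidAlgebra ℂ G)))).symm
  obtain ⟨i₀, hi₀⟩ := hDe
  set w := D e i₀ with hw
  have hfixw : ∀ h : G, MonoidAlgebra.single h (1:ℂ) • w = w := by
    intro h
    have h1 : D (MonoidAlgebra.single h (1:ℂ) • e) = MonoidAlgebra.single h (1:ℂ) • D e :=
      DirectSum.decompose_smul _ _ _
    rw [smul_eq_mul, he_fix h] at h1
    have h2 := congrFun (congrArg DFunLike.coe h1) i₀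
    rw [DirectSum.smul_apply] at h2
    exact h2.symm
  -- the component i₀ is 1-dimensional
  have hfr : Module.finrank ℂ
      ((i₀ : Submodule (MonoidAlgebra ℂ G) (MonoidAlgebra ℂ G)).restrictScalars ℂ) = 1 := by
    haveI := hsimp i₀
    have hspan : Submodule.span (MonoidAlgebra ℂ G) ({w} : Set (i₀ : Submodule (MonoidAlgebra ℂ G) (MonoidAlgebra ℂ G))) = ⊤ := by
      rcases eq_bot_or_eq_top (Submodule.span (MonoidAlgebra ℂ G) ({w} : Set _)) with hq | hq
      · exfalso
        apply hi₀
        have : w ∈ Submodule.span (MonoidAlgebra ℂ G) ({w} : Set _) :=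
          Submodule.mem_span_singleton_self w
        rw [hq] at this
        simpa using this
      · exact hq
    -- every element is a ℂ-multiple of w
    have hscal : ∀ v : (i₀ : Submodule (MonoidAlgebra ℂ G) (MonoidAlgebra ℂ G)), ∃ c : ℂ, c • w = v := by
      intro v
      have hv : v ∈ Submodule.span (MonoidAlgebra ℂ G) ({w} : Set _) := by rw [hspan]; trivial
      obtain ⟨a, ha⟩ := Submodule.mem_span_singleton.mp hv
      refine ⟨∑ h ∈ a.coeff.support, a.coeff h, ?_⟩
      apply Subtype.ext
      have hcoe : ((a • w : (i₀ : Submodule (MonoidAlgebra ℂ G) (MonoidAlgebra ℂ G))) : MonoidAlgebra ℂ G) = a • (w : MonoidAlgebra ℂ G) := rfl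
      have hcoe2 : (((∑ h ∈ a.coeff.support, a.coeff h : ℂ) • w : (i₀ : Submodule (MonoidAlgebra ℂ G) (MonoidAlgebra ℂ G))) : MonoidAlgebra ℂ G)
          = (∑ h ∈ a.coeff.support, a.coeff h : ℂ) • (w : MonoidAlgebra ℂ G) := rfl
      rw [← ha, hcoe, hcoe2]
      symm
      -- a • ↑w = (∑ coeffs) • ↑w
      have hfix' : ∀ h : G, MonoidAlgebra.single h (1:ℂ) * (w : MonoidAlgebra ℂ G) = (w : MonoidAlgebra ℂ G) := by
        intro h
        have := congrArg (Subtype.val) (hfixw h)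
        exact this
      calc a • (w : MonoidAlgebra ℂ G) = a * (w : MonoidAlgebra ℂ G) := rfl
        _ = (a.coeff.sum MonoidAlgebra.single) * (w : MonoidAlgebra ℂ G) := by rw [MonoidAlgebra.sum_coeff_single a]
        _ = ∑ h ∈ a.coeff.support, MonoidAlgebra.single h (a.coeff h) * (w : MonoidAlgebra ℂ G) := by
            rw [Finsupp.sum, Finset.sum_mul]
        _ = ∑ h ∈ a.coeff.support, (a.coeff h) • ((w : MonoidAlgebra ℂ G)) := by
            refine Finset.sum_congr rfl fun h _ => ?_
            rw [show MonoidAlgebra.single h (a.coeff h) = (a.coeff h) • MonoidAlgebra.single h (1:ℂ) by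
              rw [MonoidAlgebra.smul_single', mul_one], smul_mul_assoc, hfix' h]
        _ = (∑ h ∈ a.coeff.support, a.coeff h : ℂ) • (w : MonoidAlgebra ℂ G) := by rw [Finset.sum_smul]
    have hwne : w ≠ 0 := hi₀
    have hspanC : Submodule.span ℂ
        ({w} : Set ((i₀ : Submodule (MonoidAlgebra ℂ G) (MonoidAlgebra ℂ G)).restrictScalars ℂ)) = ⊤ := by
      rw [eq_top_iff]
      intro v _
      obtain ⟨c, hc⟩ := hscal v
      rw [← hc]
      exact Submodule.smul_mem _ c (Submodule.mem_span_singleton_self w)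
    have := finrank_span_singleton (K := ℂ) hwne
    rw [← finrank_top ℂ ((i₀ : Submodule (MonoidAlgebra ℂ G) (MonoidAlgebra ℂ G)).restrictScalars ℂ), ← hspanC]
    exact this
  -- final contradiction
  have hone : t i₀ = 1 := by
    rw [ht]
    exact VOaux.trace_rho_of_mem_commutator (VOaux.rhoP G (i₀ : _)) hfr hx
  have hre : (0:ℝ) = ∑ i : s, (t i).re := by
    have := congrArg Complex.re htr
    rw [Complex.zero_re] at this
    rw [this, Complex.re_sum]
  have hnn : ∀ i ∈ (Finset.univ : Finset s), 0 ≤ (t i).re := by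
    intro i _
    rcases hvals i with h | h <;> rw [h] <;> norm_num
  have hzero := (Finset.sum_eq_zero_iff_of_nonneg hnn).mp hre.symm i₀ (Finset.mem_univ _)
  rw [hone] at hzero
  norm_num at hzero

lemma lcs_map_eq {G H : Type*} [Group G] [Group H] (f : G →* H) (hf : Function.Surjective f)
    (n : ℕ) : Subgroup.map f ((⊤ : Subgroup G).lowerCentralSeries n) = (⊤ : Subgroup H).lowerCentralSeries n := by
  induction n with
  | zero => simpa using Subgroup.map_top_of_surjective f hf
  | succ n ih =>
    show Subgroup.map f ⁅(⊤ : Subgroup G).lowerCentralSeries n, ⊤⁆ = ⁅(⊤ : Subgroup H).lowerCentralSeries n, ⊤⁆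
    rw [Subgroup.map_commutator, ih, Subgroup.map_top_of_surjective f hf]

lemma Vseries_propagate (G : Type) [Group G] (m : ℕ)
    (h : Vseries G m = (⊤ : Subgroup G).lowerCentralSeries m) :
    ∀ j, Vseries G (m + j) = (⊤ : Subgroup G).lowerCentralSeries (m + j) := by
  intro j
  induction j with
  | zero => exact h
  | succ j ih =>
    show ⁅Vseries G (m + j), ⊤⁆ = ⁅(⊤ : Subgroup G).lowerCentralSeries (m + j), ⊤⁆
    rw [ih]

/-- For a finite nonabelian group `G` (with `G_i` the lower central series, `G_1 = G`, and
`V_i = V_i(G)`, here `G_i =` `(⊤ : Subgroup G).lowerCentralSeries (i-1)` and `V_i = Vseries G (i-1)`):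
`G_{i+1} ≤ V_i(G) ≤ G_i` for all `i ≥ 1`; and if `V_n(G) < G_n` for some `n ≥ 1`, then
`V_i(G) < G_i` for all `1 ≤ i ≤ n` and `G/V_n(G)` is nilpotent of class exactly `n`. -/
theorem Vseries_le_lowerCentralSeries (G : Type) [Group G] [Finite G]
    (hna : ¬ ∀ a b : G, a * b = b * a) :
    (∀ i : ℕ, 1 ≤ i →
        (⊤ : Subgroup G).lowerCentralSeries i ≤ Vseries G (i - 1) ∧
          Vseries G (i - 1) ≤ (⊤ : Subgroup G).lowerCentralSeries (i - 1)) ∧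
      ∀ n : ℕ, 1 ≤ n → Vseries G (n - 1) < (⊤ : Subgroup G).lowerCentralSeries (n - 1) →
        (∀ i : ℕ, 1 ≤ i → i ≤ n → Vseries G (i - 1) < (⊤ : Subgroup G).lowerCentralSeries (i - 1)) ∧
          ∃ h : Group.IsNilpotent (G ⧸ Vseries G (n - 1)),
            @Group.nilpotencyClass (G ⧸ Vseries G (n - 1)) _ = n := by
  have base : ∀ j : ℕ, (⊤ : Subgroup G).lowerCentralSeries (j + 1) ≤ Vseries G j ∧
      Vseries G j ≤ (⊤ : Subgroup G).lowerCentralSeries j := by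
    intro j
    induction j with
    | zero => exact ⟨commutator_le_vanishingOff G, le_top⟩
    | succ j ih =>
      constructor
      · show ⁅(⊤ : Subgroup G).lowerCentralSeries (j+1), ⊤⁆ ≤ ⁅Vseries G j, ⊤⁆
        exact Subgroup.commutator_mono ih.1 le_rfl
      · show ⁅Vseries G j, ⊤⁆ ≤ ⁅(⊤ : Subgroup G).lowerCentralSeries j, ⊤⁆
        exact Subgroup.commutator_mono ih.2 le_rfl
  have partA : ∀ i : ℕ, 1 ≤ i → (⊤ : Subgroup G).lowerCentralSeries i ≤ Vseries G (i - 1) ∧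
      Vseries G (i - 1) ≤ (⊤ : Subgroup G).lowerCentralSeries (i - 1) := by
    intro i hi
    obtain ⟨j, rfl⟩ : ∃ j, i = j + 1 := ⟨i - 1, by omega⟩
    simpa using base j
  refine ⟨partA, ?_⟩
  intro n hn hlt
  have hstrict : ∀ i : ℕ, 1 ≤ i → i ≤ n →
      Vseries G (i - 1) < (⊤ : Subgroup G).lowerCentralSeries (i - 1) := by
    intro i h1 h2
    refine lt_of_le_of_ne (partA i h1).2 (fun heq => ?_)
    have := Vseries_propagate G (i - 1) heq (n - i)
    rw [show i - 1 + (n - i) = n - 1 by omega] at this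
    exact absurd this (ne_of_lt hlt)
  refine ⟨hstrict, ?_⟩
  set N := Vseries G (n - 1) with hN
  set π := QuotientGroup.mk' N with hπ
  have hsurj : Function.Surjective π := QuotientGroup.mk'_surjective N
  have hker : π.ker = N := QuotientGroup.ker_mk' N
  have hbot : (⊤ : Subgroup (G ⧸ N)).lowerCentralSeries n = ⊥ := by
    rw [← lcs_map_eq π hsurj n, Subgroup.map_eq_bot_iff, hker]
    obtain ⟨j, rfl⟩ : ∃ j, n = j + 1 := ⟨n - 1, by omega⟩
    simpa [hN] using (base j).1
  haveI hnil : Group.IsNilpotent (G ⧸ N) := nilpotent_iff_lowerCentralSeries.mpr ⟨n, hbot⟩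
  refine ⟨hnil, le_antisymm (lowerCentralSeries_eq_bot_iff_nilpotencyClass_le.mp hbot) ?_⟩
  by_contra hcl
  push_neg at hcl
  have hle : Group.nilpotencyClass (G ⧸ N) ≤ n - 1 := Nat.le_pred_of_lt hcl
  have hb2 : (⊤ : Subgroup (G ⧸ N)).lowerCentralSeries (n - 1) = ⊥ :=
    lowerCentralSeries_eq_bot_iff_nilpotencyClass_le.mpr hle
  rw [← lcs_map_eq π hsurj (n - 1), Subgroup.map_eq_bot_iff, hker] at hb2
  exact absurd hb2 (not_le_of_gt hlt)
end
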